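/- arXiv:2006.06732 — 7 statements merged into one kernel-verified Lean document; each statement's English description precedes it below -/
import Mathlib

section
/- Let G : H → ℝ be μ-strongly convex with respect to the 𝓛-norm and L_B-smooth on the sublevel set B = {x ∈ H : G(x) ≤ G(x₀)}, where x₀ ∈ H is a given initial guess, and let x* be the unique minimizer of G. Consider the preconditioned gradient descent iterates x_{k+1} = x_k − s·𝓛⁻¹G'(x_k). If the step size satisfies s ∈ (0, 2/(L_B + μ)], then x_k ∈ B for all k ≥ 0; moreover, if s = 2/(L_B + μ), then with ρ := μ/L_B one has ‖x_k − x*‖_𝓛 ≤ ((1 − ρ)/(1 + ρ))^k ‖x₀ − x*‖_𝓛 for all k ≥ 0. -/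
/-!
Along a ray `τ ↦ z + τ v` starting in the convex sublevel set `{G ≤ c}`, smoothness with
constant `M` gives the quadratic majorant `G (z + τ v) ≤ G z + τ G'(z) v + M τ² ‖v‖²_𝓛 / 2` as long
as the ray stays in the sublevel set, and real induction shows that it does stay there while the
majorant is below `c`. Along a preconditioned gradient step with `s M ≤ 2` the majorant never
exceeds `G z`, which gives the invariance of `B`.

For the rate, let `e = z - x*` and `d = 𝓛⁻¹G'(z) - μ e`, the preconditioned gradient at `z` of the
convex function `G - μ ‖· - x*‖²_𝓛 / 2`. The textbook proof of the co-coercivity bound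
`‖d‖²_𝓛 ≤ (M - μ) (d, e)_𝓛` compares `G` at the auxiliary points `z - t d` and `x* + t d`, which are
only known to lie in `B` for small `t`. If the bound failed, `t = (d, e)_𝓛 / ‖d‖²_𝓛` would be small
enough, and the two comparisons at this `t` already contradict the failure. Co-coercivity expands to
`‖e - s 𝓛⁻¹G'(z)‖_𝓛 ≤ |1 - s μ| ‖e‖_𝓛`.
-/

open Filter Set Topology

theorem Icc_subset_setOf_le_of_forall_lt {f : ℝ → ℝ} {c T : ℝ} (hf : Continuous f)
    (h0 : f 0 ≤ c) (hstart : ∀ᶠ τ in 𝓝[>] 0, f τ ≤ c)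
    (hstep : ∀ τ ∈ Ioo 0 T, f τ ≤ c → f τ < c) :
    Icc 0 T ⊆ {τ | f τ ≤ c} := by
  refine IsClosed.Icc_subset_of_forall_mem_nhdsWithin
    ((isClosed_le hf continuous_const).inter isClosed_Icc) h0 ?_
  rintro τ ⟨hτ, h0τ, hτT⟩
  rcases h0τ.eq_or_lt with rfl | hτpos
  · exact hstart
  · exact nhdsWithin_le_nhds <| (hf.continuousAt.eventually_lt continuousAt_const
      (hstep τ ⟨hτpos, hτT⟩ hτ)).mono fun _ => le_of_lt

/-- With `qv = ‖d‖²_𝓛`, `β = (d, e)_𝓛`, `E = ‖e‖²_𝓛` and `Δ = G z - G x*`, the hypotheses `h₁` and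
`h₂` are what comparing `G` at `z - σ d` and at `x* + t d` yields. -/
theorem le_mul_of_descent_bounds {M μ qv β E Δ : ℝ} (hM : 0 < M) (hμ : 0 ≤ μ) (hqv : 0 < qv)
    (hβ : 0 ≤ β) (hCS : β ^ 2 ≤ qv * E) (h₀ : Δ - μ * E / 2 ≤ β)
    (h₁ : ∀ σ, 0 < σ → M * σ * qv ≤ 2 * (qv + μ * β) →
      (σ - (M - μ) * σ ^ 2 / 2) * qv ≤ Δ - μ * E / 2)
    (h₂ : ∀ t, 0 < t → M * t ^ 2 * qv ≤ 2 * Δ →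
      Δ - μ * E / 2 + (t - (M - μ) * t ^ 2 / 2) * qv ≤ β) :
    qv ≤ (M - μ) * β := by
  by_contra! hlt
  rcases hβ.eq_or_lt with rfl | hβpos
  · have hσ : M * (1 / M) * qv ≤ 2 * (qv + μ * 0) := by field_simp; linarith
    have hgain : (1 / M - (M - μ) * (1 / M) ^ 2 / 2) * qv = (M + μ) / (2 * M ^ 2) * qv := by
      field_simp; ring
    have h₁M := h₁ (1 / M) (by positivity) hσ
    have hgain_pos : 0 < (M + μ) / (2 * M ^ 2) * qv := by positivity
    linarith
  · set t := β / qv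
    have ht : t * qv = β := div_mul_cancel₀ _ hqv.ne'
    have htpos : 0 < t := div_pos hβpos hqv
    have hgain : (t - (M - μ) * t ^ 2 / 2) * qv = β - (M - μ) * t * β / 2 := by
      rw [← ht]; ring
    have hMt : (M - μ) * t < 1 := by nlinarith
    have htE : t * β ≤ E := by nlinarith
    have h₁t := h₁ t htpos (by nlinarith)
    have hreach : M * t ^ 2 * qv ≤ 2 * Δ := by
      have hsq : M * t ^ 2 * qv = M * t * β := by rw [← ht]; ring
      nlinarith [mul_lt_mul_of_pos_right hMt hβpos, mul_le_mul_of_nonneg_left htE hμ]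
    have h₂t := h₂ t htpos hreach
    nlinarith [mul_lt_mul_of_pos_right hMt hβpos]

theorem sqrt_le_pow_mul_sqrt_of_le_sq_mul {a : ℕ → ℝ} {r : ℝ} (h : ∀ k, a (k + 1) ≤ r ^ 2 * a k)
    (k : ℕ) : √(a k) ≤ |r| ^ k * √(a 0) := by
  induction k with
  | zero => simp
  | succ k ih =>
    calc √(a (k + 1)) ≤ √(r ^ 2 * a k) := Real.sqrt_le_sqrt (h k)
      _ = |r| * √(a k) := by rw [Real.sqrt_mul (sq_nonneg r), Real.sqrt_sq_eq_abs]
      _ ≤ |r| * (|r| ^ k * √(a 0)) := by gcongr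
      _ = |r| ^ (k + 1) * √(a 0) := by ring

section PreconditionedGradient

variable {H : Type*} [NormedAddCommGroup H] [NormedSpace ℝ H]
  {L : H →ₗ[ℝ] H →L[ℝ] ℝ} {G : H → ℝ} {G' : H → H →L[ℝ] ℝ}

def IsStronglyMonotoneOn (L : H →ₗ[ℝ] H →L[ℝ] ℝ) (G' : H → H →L[ℝ] ℝ) (m : ℝ) (S : Set H) :
    Prop :=
  ∀ x ∈ S, ∀ y ∈ S, m * L (x - y) (x - y) ≤ (G' x - G' y) (x - y)

def IsSmoothOn (L : H →ₗ[ℝ] H →L[ℝ] ℝ) (G' : H → H →L[ℝ] ℝ) (M : ℝ) (S : Set H) : Prop :=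
  ∀ x ∈ S, ∀ y ∈ S, (G' x - G' y) (x - y) ≤ M * L (x - y) (x - y)

theorem apply_smul_smul_self (L : H →ₗ[ℝ] H →L[ℝ] ℝ) (t : ℝ) (v : H) :
    L (t • v) (t • v) = t ^ 2 * L v v := by
  simp only [map_smul, smul_apply, smul_eq_mul]
  ring

theorem hasDerivAt_comp_add_smul (hdiff : ∀ x, HasFDerivAt G (G' x) x) (z v : H) (t : ℝ) :
    HasDerivAt (fun τ : ℝ => G (z + τ • v)) (G' (z + t • v) v) t := by
  have hline : HasDerivAt (fun τ : ℝ => z + τ • v) v t := by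
    simpa using ((hasDerivAt_id t).smul_const v).const_add z
  exact (hdiff (z + t • v)).comp_hasDerivAt t hline

theorem IsStronglyMonotoneOn.quadratic_le {S : Set H} {m : ℝ} (hS : Convex ℝ S)
    (hdiff : ∀ x, HasFDerivAt G (G' x) x) (hmono : IsStronglyMonotoneOn L G' m S)
    {z w : H} (hz : z ∈ S) (hw : w ∈ S) :
    G z + G' z (w - z) + m / 2 * L (w - z) (w - z) ≤ G w := by
  set v := w - z
  set ψ : ℝ → ℝ := fun τ => G (z + τ • v) - τ * G' z v - τ ^ 2 * (m / 2 * L v v)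
  have hψ : ∀ τ, HasDerivAt ψ (G' (z + τ • v) v - G' z v - 2 * τ * (m / 2 * L v v)) τ := by
    intro τ
    have hlin : HasDerivAt (fun τ : ℝ => τ * G' z v) (G' z v) τ := by
      simpa using (hasDerivAt_id τ).mul_const (G' z v)
    have hsq : HasDerivAt (fun τ : ℝ => τ ^ 2 * (m / 2 * L v v)) (2 * τ * (m / 2 * L v v)) τ := by
      simpa using (hasDerivAt_pow 2 τ).mul_const (m / 2 * L v v)
    exact ((hasDerivAt_comp_add_smul hdiff z v τ).sub hlin).sub hsq
  have hmonoψ : MonotoneOn ψ (Icc 0 1) := by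
    refine monotoneOn_of_deriv_nonneg (convex_Icc 0 1)
      (HasDerivAt.continuousOn fun τ _ => hψ τ)
      (fun τ _ => (hψ τ).differentiableAt.differentiableWithinAt) fun τ hτ => ?_
    rw [interior_Icc] at hτ
    have hmem : z + τ • v ∈ S := by
      simpa [v] using hS.add_smul_sub_mem hz hw ⟨hτ.1.le, hτ.2.le⟩
    have h := hmono _ hmem _ hz
    rw [add_sub_cancel_left, apply_smul_smul_self, sub_apply, map_smul,
      map_smul, smul_eq_mul, smul_eq_mul] at h
    rw [(hψ τ).deriv]
    nlinarith [hτ.1]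
  have h01 := hmonoψ (left_mem_Icc.2 zero_le_one) (right_mem_Icc.2 zero_le_one) zero_le_one
  simp only [ψ, zero_smul, add_zero, one_smul, v, add_sub_cancel] at h01
  linarith

theorem IsSmoothOn.le_quadratic {S : Set H} {M : ℝ} (hS : Convex ℝ S)
    (hdiff : ∀ x, HasFDerivAt G (G' x) x) (hsm : IsSmoothOn L G' M S)
    {z w : H} (hz : z ∈ S) (hw : w ∈ S) :
    G w ≤ G z + G' z (w - z) + M / 2 * L (w - z) (w - z) := by
  have hmono : IsStronglyMonotoneOn L (-G') (-M) S := fun x hx y hy => by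
    have := hsm x hx y hy
    simp only [Pi.neg_apply, sub_apply, neg_apply] at this ⊢
    linarith
  have := IsStronglyMonotoneOn.quadratic_le (G := -G) hS (fun x => (hdiff x).neg) hmono hz hw
  simp only [Pi.neg_apply, neg_apply] at this
  linarith

theorem convexOn_univ_of_tangent_le (h : ∀ z w, G z + G' z (w - z) ≤ G w) :
    ConvexOn ℝ univ G := by
  refine ⟨convex_univ, fun x _ y _ a b ha hb hab => ?_⟩
  set m := a • x + b • y
  have hcomb : a • (x - m) + b • (y - m) = 0 := by
    rw [smul_sub, smul_sub, sub_add_sub_comm, ← add_smul, hab, one_smul, sub_self]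
  have hgrad : a * G' m (x - m) + b * G' m (y - m) = 0 := by
    simpa only [map_add, map_smul, smul_eq_mul, map_zero] using congrArg (G' m) hcomb
  calc G (a • x + b • y)
      = a * (G m + G' m (x - m)) + b * (G m + G' m (y - m)) := by
        linear_combination (-G m) * hab - hgrad
    _ ≤ a • G x + b • G y := by
        simp only [smul_eq_mul]
        gcongr
        exacts [h m x, h m y]

theorem IsStronglyMonotoneOn.convexOn_univ {μ : ℝ} (hdiff : ∀ x, HasFDerivAt G (G' x) x)
    (hpos : ∀ x, 0 ≤ L x x) (hμ : 0 ≤ μ) (hsc : IsStronglyMonotoneOn L G' μ univ) :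
    ConvexOn ℝ univ G :=
  convexOn_univ_of_tangent_le fun z w =>
    le_trans (le_add_of_nonneg_right (by have := hpos (w - z); positivity))
      (hsc.quadratic_le convex_univ hdiff (mem_univ z) (mem_univ w))

theorem IsStronglyMonotoneOn.le_of_isSmoothOn {S : Set H} {μ M : ℝ} {x y : H}
    (hposdef : ∀ x, x ≠ 0 → 0 < L x x) (hsc : IsStronglyMonotoneOn L G' μ S)
    (hsm : IsSmoothOn L G' M S) (hx : x ∈ S) (hy : y ∈ S) (hxy : x ≠ y) : μ ≤ M :=
  le_of_mul_le_mul_right ((hsc x hx y hy).trans (hsm x hx y hy)) (hposdef _ (sub_ne_zero.2 hxy))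

theorem IsSmoothOn.le_quadratic_along_ray {c M T : ℝ} {z v : H}
    (hdiff : ∀ x, HasFDerivAt G (G' x) x) (hS : Convex ℝ {x | G x ≤ c})
    (hsm : IsSmoothOn L G' M {x | G x ≤ c}) (hz : G z ≤ c) (hstart : G z < c ∨ G' z v < 0)
    (hT : 0 ≤ T) (hbound : ∀ τ ∈ Ioo 0 T, G z + τ * G' z v + M / 2 * τ ^ 2 * L v v < c) :
    G (z + T • v) ≤ G z + T * G' z v + M / 2 * T ^ 2 * L v v := by
  set f : ℝ → ℝ := fun τ => G (z + τ • v)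
  have hf' : ∀ τ, HasDerivAt f (G' (z + τ • v) v) τ := hasDerivAt_comp_add_smul hdiff z v
  have hf : Continuous f := continuous_iff_continuousAt.2 fun τ => (hf' τ).continuousAt
  have hf0 : f 0 = G z := by simp [f]
  have hquad : ∀ τ, f τ ≤ c → f τ ≤ G z + τ * G' z v + M / 2 * τ ^ 2 * L v v := fun τ hτ => by
    have := hsm.le_quadratic hS hdiff hz hτ
    rwa [add_sub_cancel_left, map_smul, smul_eq_mul, apply_smul_smul_self, ← mul_assoc] at this
  have hstart' : ∀ᶠ τ in 𝓝[>] 0, f τ ≤ c := by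
    rcases hstart with hlt | hneg
    · rw [← hf0] at hlt
      exact nhdsWithin_le_nhds <| (hf.continuousAt.eventually_lt continuousAt_const hlt).mono
        fun _ => le_of_lt
    · have hslope : Tendsto (slope f 0) (𝓝[>] 0) (𝓝 (G' z v)) := by
        refine (hasDerivWithinAt_iff_tendsto_slope' (lt_irrefl (0 : ℝ))).1 ?_
        simpa using (hf' 0).hasDerivWithinAt
      filter_upwards [hslope.eventually_lt_const hneg, self_mem_nhdsWithin]
        with τ hτ (hτpos : 0 < τ)
      exact ((slope_nonpos_iff_of_le hτpos.le).1 hτ.le).trans (hf0 ▸ hz)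
  exact hquad T <| Icc_subset_setOf_le_of_forall_lt hf (hf0 ▸ hz) hstart'
    (fun τ hτ hle => (hquad τ hle).trans_lt (hbound τ hτ)) ⟨hT, le_rfl⟩

theorem gradient_step_le {c M s : ℝ} {z u : H} (hdiff : ∀ x, HasFDerivAt G (G' x) x)
    (hposdef : ∀ x, x ≠ 0 → 0 < L x x) (hS : Convex ℝ {x | G x ≤ c})
    (hsm : IsSmoothOn L G' M {x | G x ≤ c}) (hz : G z ≤ c) (hu : L u = G' z)
    (hs : 0 ≤ s) (hsM : s * M ≤ 2) :
    G (z - s • u) ≤ G z := by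
  rcases eq_or_ne u 0 with rfl | hu0
  · simp
  have hq := hposdef u hu0
  have hgrad : G' z (-u) = -L u u := by rw [← hu, map_neg]
  have hLneg : L (-u) (-u) = L u u := by simp
  have hMτ : ∀ τ ∈ Ioo 0 s, M * τ < 2 := fun τ hτ => by
    rcases le_or_gt M 0 with hM | hM <;> nlinarith [hτ.1, hτ.2]
  have hstep := IsSmoothOn.le_quadratic_along_ray hdiff hS hsm hz (Or.inr (by linarith)) hs
    (fun τ hτ => by rw [hgrad, hLneg]; nlinarith [hMτ τ hτ, mul_pos hτ.1 hq])
  rw [smul_neg, ← sub_eq_add_neg, hgrad, hLneg] at hstep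
  nlinarith [mul_nonneg hs hq.le]

theorem gradient_descent_le {c M s : ℝ} {x : ℕ → H} (hdiff : ∀ x, HasFDerivAt G (G' x) x)
    (hposdef : ∀ x, x ≠ 0 → 0 < L x x) (hS : Convex ℝ {x | G x ≤ c})
    (hsm : IsSmoothOn L G' M {x | G x ≤ c}) {Linv : (H →L[ℝ] ℝ) → H}
    (hLinv : ∀ f, L (Linv f) = f) (hs : 0 ≤ s) (hsM : s * M ≤ 2) (hc : G (x 0) ≤ c)
    (hx : ∀ k, x (k + 1) = x k - s • Linv (G' (x k))) (k : ℕ) :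
    G (x k) ≤ c := by
  induction k with
  | zero => exact hc
  | succ k ih =>
    rw [hx k]
    exact (gradient_step_le hdiff hposdef hS hsm ih (hLinv _) hs hsM).trans ih

theorem cocoercive_at_minimizer {c μ M : ℝ} {xstar z u : H}
    (hdiff : ∀ x, HasFDerivAt G (G' x) x) (hsymm : ∀ x y, L x y = L y x)
    (hpos : ∀ x, 0 ≤ L x x) (hμ : 0 ≤ μ) (hM : 0 < M)
    (hsc : IsStronglyMonotoneOn L G' μ univ) (hsm : IsSmoothOn L G' M {x | G x ≤ c})
    (hgrad : G' xstar = 0) (hz : G z ≤ c) (hu : L u = G' z) :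
    L (u - μ • (z - xstar)) (u - μ • (z - xstar))
      ≤ (M - μ) * L (u - μ • (z - xstar)) (z - xstar) := by
  set e := z - xstar
  set d := u - μ • e
  have hconv : Convex ℝ {x | G x ≤ c} := by
    simpa using (hsc.convexOn_univ hdiff hpos hμ).convex_le c
  have hlower : ∀ a b, G a + G' a (b - a) + μ / 2 * L (b - a) (b - a) ≤ G b := fun a b =>
    hsc.quadratic_le convex_univ hdiff (mem_univ a) (mem_univ b)
  have hG'z : ∀ w, G' z w = L d w + μ * L e w := fun w => by
    rw [← hu, show u = d + μ • e by simp [d]]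
    simp
  have hed : L e d = L d e := hsymm e d
  have hβ : 0 ≤ L d e := by
    have := hsc z trivial xstar trivial
    rw [hgrad, sub_zero, hG'z] at this
    linarith
  have hCS : L d e ^ 2 ≤ L d d * L e e :=
    LinearMap.BilinForm.apply_sq_le_of_symm ((ContinuousLinearMap.coeLM ℝ).comp L) hpos
      ⟨fun x y => hsymm x y⟩ d e
  rcases (hpos d).eq_or_lt with hqv0 | hqv
  · rw [← hqv0, zero_mul] at hCS
    rw [← hqv0, pow_eq_zero_iff two_ne_zero |>.1 (le_antisymm hCS (sq_nonneg _)), mul_zero]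
  have hdd : L (-d) (-d) = L d d := by simp
  have hG'd : G' z (-d) = -(L d d + μ * L d e) := by rw [map_neg, hG'z, hed]
  refine le_mul_of_descent_bounds (Δ := G z - G xstar) hM hμ hqv hβ hCS ?_ ?_ ?_
  · have := hlower z xstar
    rw [show xstar - z = -e by simp [e], map_neg, hG'z] at this
    simp only [map_neg, neg_apply, neg_neg] at this
    linarith
  · intro σ hσ hσM
    have hup := IsSmoothOn.le_quadratic_along_ray hdiff hconv hsm hz (v := -d) (T := σ)
      (Or.inr (by rw [hG'd]; nlinarith)) hσ.le fun τ hτ => by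
        have : M * τ * L d d < M * σ * L d d := by gcongr; exact hτ.2
        rw [hG'd, hdd]
        nlinarith [mul_pos hτ.1 (by linarith : 0 < 2 * (L d d + μ * L d e) - M * τ * L d d)]
    have hlo := hlower xstar (z + σ • -d)
    rw [hgrad, show z + σ • -d - xstar = e - σ • d by simp [e]; abel] at hlo
    rw [hG'd, hdd] at hup
    simp only [map_sub, map_smul, sub_apply, smul_apply, smul_eq_mul, hed,
      zero_apply] at hlo
    linarith
  · intro t ht htM
    have hxs : G xstar < c := by linarith [mul_pos (mul_pos hM (pow_pos ht 2)) hqv]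
    have hup := IsSmoothOn.le_quadratic_along_ray hdiff hconv hsm hxs.le (v := d) (T := t)
      (Or.inl hxs) ht.le fun τ hτ => by
        have : M * τ ^ 2 * L d d < M * t ^ 2 * L d d := by gcongr; exacts [hτ.1.le, hτ.2]
        rw [hgrad, zero_apply]
        linarith
    have hlo := hlower z (xstar + t • d)
    rw [show xstar + t • d - z = t • d - e by simp [e]; abel, hG'z] at hlo
    rw [hgrad, zero_apply] at hup
    simp only [map_sub, map_smul, sub_apply, smul_apply, smul_eq_mul, hed] at hlo
    linarith

theorem gradient_step_dist_sq_le {c μ M s : ℝ} {xstar z u : H}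
    (hdiff : ∀ x, HasFDerivAt G (G' x) x) (hsymm : ∀ x y, L x y = L y x)
    (hpos : ∀ x, 0 ≤ L x x) (hμ : 0 ≤ μ) (hM : 0 < M)
    (hsc : IsStronglyMonotoneOn L G' μ univ) (hsm : IsSmoothOn L G' M {x | G x ≤ c})
    (hgrad : G' xstar = 0) (hz : G z ≤ c) (hu : L u = G' z) (hs : 0 ≤ s)
    (hsM : s * (M + μ) ≤ 2) :
    L (z - s • u - xstar) (z - s • u - xstar) ≤ (1 - s * μ) ^ 2 * L (z - xstar) (z - xstar) := by
  have hcoco := cocoercive_at_minimizer hdiff hsymm hpos hμ hM hsc hsm hgrad hz hu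
  set e := z - xstar
  set d := u - μ • e
  have hβ : 0 ≤ L d e := by
    have := hsc z trivial xstar trivial
    rw [hgrad, sub_zero, ← hu] at this
    simp only [d, map_sub, map_smul, sub_apply, smul_apply, smul_eq_mul]
    linarith
  rw [show z - s • u - xstar = (1 - s * μ) • e - s • d by
    simp only [d, e, smul_sub, sub_smul, one_smul, smul_smul]; abel]
  simp only [map_sub, map_smul, sub_apply, smul_apply, smul_eq_mul, hsymm e d]
  nlinarith [mul_le_mul_of_nonneg_left hcoco (sq_nonneg s),
    mul_nonneg (mul_nonneg hs hβ) (by linarith : 0 ≤ 2 - s * (M + μ))]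

end PreconditionedGradient

open TopologicalSpace

theorem PGD_invariance_and_exponential_convergence_general
    {H : Type*} [NormedAddCommGroup H] [InnerProductSpace ℝ H]
    (L : H →ₗ[ℝ] (H →L[ℝ] ℝ))
    (C₁ : ℝ) (hC₁ : 0 < C₁)
    (hsymm : ∀ x y : H, L x y = L y x)
    (hcoer : ∀ x : H, C₁ * ‖x‖ ^ 2 ≤ L x x)
    (Linv : (H →L[ℝ] ℝ) → H)
    (hLinv : ∀ f : H →L[ℝ] ℝ, L (Linv f) = f)
    (G : H → ℝ) (G' : H → H →L[ℝ] ℝ)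
    (hdiff : ∀ x : H, HasFDerivAt G (G' x) x)
    (μ LB : ℝ) (hμ : 0 < μ) (hLB : 0 < LB)
    -- strong convexity
    (hsc : ∀ x y : H, (G' x - G' y) (x - y) ≥ μ * L (x - y) (x - y))
    (x₀ : H) (B : Set H) (hB : B = {x : H | G x ≤ G x₀})
    -- L_B-smoothness on B
    (hsm : ∀ x ∈ B, ∀ y ∈ B, (G' x - G' y) (x - y) ≤ LB * L (x - y) (x - y))
    -- minimizer
    (xstar : H) (hmin : ∀ y : H, G xstar ≤ G y)
    -- step size and iterates
    (s : ℝ) (hs : 0 < s) (hs' : s ≤ 2 / (LB + μ))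
    (x : ℕ → H) (hx0 : x 0 = x₀)
    (hx : ∀ k : ℕ, x (k + 1) = x k - s • Linv (G' (x k))) :
    (∀ k : ℕ, x k ∈ B) ∧
    (s = 2 / (LB + μ) →
      ∀ k : ℕ,
        Real.sqrt (L (x k - xstar) (x k - xstar))
          ≤ ((1 - μ / LB) / (1 + μ / LB)) ^ k
              * Real.sqrt (L (x₀ - xstar) (x₀ - xstar))) := by
  subst hB
  have hpos : ∀ x, 0 ≤ L x x := fun x => le_trans (by positivity) (hcoer x)
  have hposdef : ∀ x, x ≠ 0 → 0 < L x x := fun x hx =>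
    lt_of_lt_of_le (by have := norm_pos_iff.2 hx; positivity) (hcoer x)
  have hsc' : IsStronglyMonotoneOn L G' μ univ := fun x _ y _ => hsc x y
  have hconv : Convex ℝ {x | G x ≤ G x₀} := by
    simpa using (hsc'.convexOn_univ hdiff hpos hμ.le).convex_le (G x₀)
  have hgrad : G' xstar = 0 :=
    IsLocalMin.hasFDerivAt_eq_zero (Eventually.of_forall hmin) (hdiff xstar)
  have hsM : s * (LB + μ) ≤ 2 := (le_div_iff₀ (by positivity)).1 hs'
  have hinv : ∀ k, G (x k) ≤ G x₀ :=
    gradient_descent_le hdiff hposdef hconv hsm hLinv hs.le (by nlinarith) (hx0 ▸ le_rfl) hx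
  refine ⟨hinv, fun hs2 k => ?_⟩
  have hstep : ∀ k, L (x (k + 1) - xstar) (x (k + 1) - xstar)
      ≤ (1 - s * μ) ^ 2 * L (x k - xstar) (x k - xstar) := fun k => by
    rw [hx k]
    exact gradient_step_dist_sq_le hdiff hsymm hpos hμ.le hLB hsc' hsm hgrad (hinv k) (hLinv _)
      hs.le hsM
  have hρ : (1 - μ / LB) / (1 + μ / LB) = 1 - s * μ := by
    rw [hs2]; field_simp; ring
  rw [hρ, ← hx0]
  calc √(L (x k - xstar) (x k - xstar))
      ≤ |1 - s * μ| ^ k * √(L (x 0 - xstar) (x 0 - xstar)) :=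
        sqrt_le_pow_mul_sqrt_of_le_sq_mul (a := fun k => L (x k - xstar) (x k - xstar)) hstep k
    _ = (1 - s * μ) ^ k * √(L (x 0 - xstar) (x 0 - xstar)) := by
      rcases eq_or_ne x₀ xstar with h | h
      · simp [hx0, h]
      · have hμLB : μ ≤ LB := IsStronglyMonotoneOn.le_of_isSmoothOn hposdef
          (fun x _ y _ => hsc x y) hsm (le_refl (G x₀)) (hmin x₀) h
        have hsμ : s * μ ≤ 1 := by nlinarith
        rw [abs_of_nonneg (by linarith)]

/-- convergence of the preconditioned gradient descent method.
If `G` is `μ`-strongly convex and `L_B`-smooth on the sublevel set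
`B = {x : G(x) ≤ G(x₀)}`, `x*` is the minimizer, and the PGD iterates are
`x_{k+1} = x_k − s 𝓛⁻¹ G'(x_k)` with `s ∈ (0, 2/(L_B+μ)]`, then `x_k ∈ B` for
all `k`; moreover, if `s = 2/(L_B+μ)` then with `ρ = μ/L_B`
`‖x_k − x*‖_𝓛 ≤ ((1−ρ)/(1+ρ))^k ‖x₀ − x*‖_𝓛`. -/
theorem PGD_invariance_and_exponential_convergence
    {H : Type*} [NormedAddCommGroup H] [InnerProductSpace ℝ H]
    [CompleteSpace H] [SeparableSpace H]
    (L : H →ₗ[ℝ] (H →L[ℝ] ℝ))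
    (C₁ C₂ : ℝ) (hC₁ : 0 < C₁) (hC₂ : 0 < C₂)
    (hsymm : ∀ x y : H, L x y = L y x)
    (hbdd : ∀ x y : H, L x y ≤ C₂ * ‖x‖ * ‖y‖)
    (hcoer : ∀ x : H, C₁ * ‖x‖ ^ 2 ≤ L x x)
    (Linv : (H →L[ℝ] ℝ) → H)
    (hLinv : ∀ f : H →L[ℝ] ℝ, L (Linv f) = f)
    (hLinv' : ∀ x : H, Linv (L x) = x)
    (G : H → ℝ) (G' : H → H →L[ℝ] ℝ)
    (hdiff : ∀ x : H, HasFDerivAt G (G' x) x)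
    (μ LB : ℝ) (hμ : 0 < μ) (hLB : 0 < LB)
    -- strong convexity
    (hsc : ∀ x y : H, (G' x - G' y) (x - y) ≥ μ * L (x - y) (x - y))
    (x₀ : H) (B : Set H) (hB : B = {x : H | G x ≤ G x₀})
    -- L_B-smoothness on B
    (hsm : ∀ x ∈ B, ∀ y ∈ B, (G' x - G' y) (x - y) ≤ LB * L (x - y) (x - y))
    -- minimizer
    (xstar : H) (hmin : ∀ y : H, G xstar ≤ G y)
    -- step size and iterates
    (s : ℝ) (hs : 0 < s) (hs' : s ≤ 2 / (LB + μ))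
    (x : ℕ → H) (hx0 : x 0 = x₀)
    (hx : ∀ k : ℕ, x (k + 1) = x k - s • Linv (G' (x k))) :
    (∀ k : ℕ, x k ∈ B) ∧
    (s = 2 / (LB + μ) →
      ∀ k : ℕ,
        Real.sqrt (L (x k - xstar) (x k - xstar))
          ≤ ((1 - μ / LB) / (1 + μ / LB)) ^ k
              * Real.sqrt (L (x₀ - xstar) (x₀ - xstar))) :=
  PGD_invariance_and_exponential_convergence_general L C₁ hC₁ hsymm hcoer Linv hLinv G G' hdiff μ LB
    hμ hLB hsc x₀ B hB hsm xstar hmin s hs hs' x hx0 hx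
end

section
/- Let G : H → ℝ be μ-strongly convex and locally Lipschitz smooth in the strong sense, let η > 0 satisfy η² ≤ μ, and let X : [0,∞) → H be the unique twice continuously differentiable solution of Ẍ(t) + 2η Ẋ(t) + 𝓛⁻¹G'(X(t)) = 0, X(0) = x₀, Ẋ(0) = 0. Define V(t) := X(t) − x* + (1/η)Ẋ(t). Then the inflated energy t ↦ e^{ηt} E(X(t), V(t)) is nonincreasing on [0,∞); consequently, E(X(t), V(t)) = (η/2)‖V(t)‖_𝓛² + (1/η)(G(X(t)) − G*) ≤ e^{−ηt} E₀ for all t ≥ 0. -/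
/-!
With `V = X - x* + Ẋ / η`, the equation of motion gives `V̇ = -Ẋ - 𝓛⁻¹G'(X) / η`, and expanding
the Lyapunov function `E = (η/2)‖V‖²_𝓛 + (G(X) - G*) / η` yields
`η E + Ė = (η²/2)‖X - x*‖²_𝓛 - ‖Ẋ‖²_𝓛 / 2 + G(X) - G* - ⟨G'(X), X - x*⟩`.
The first-order form of strong convexity, `G* ≥ G(X) + ⟨G'(X), x* - X⟩ + (μ/2)‖X - x*‖²_𝓛`,
bounds this by `((η² - μ)/2)‖X - x*‖²_𝓛 - ‖Ẋ‖²_𝓛 / 2 ≤ 0`, so `(e^{ηt} E)' = e^{ηt}(η E + Ė) ≤ 0`.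
-/

open TopologicalSpace Set

section

variable {E : Type*} [NormedAddCommGroup E] [NormedSpace ℝ E]

theorem antitoneOn_exp_mul_of_hasDerivWithinAt {D : Set ℝ} (hD : Convex ℝ D) {f f' : ℝ → ℝ}
    {c : ℝ} (hf : ∀ t ∈ D, HasDerivWithinAt f (f' t) D t)
    (hf' : ∀ t ∈ interior D, c * f t + f' t ≤ 0) :
    AntitoneOn (fun t => Real.exp (c * t) * f t) D := by
  have hg : ∀ t ∈ D, HasDerivWithinAt (fun t => Real.exp (c * t) * f t)
      (Real.exp (c * t) * (c * f t + f' t)) D t := fun t ht => by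
    have hexp := (((hasDerivAt_id t).const_mul c).exp).hasDerivWithinAt (s := D)
    refine (hexp.mul (hf t ht)).congr_deriv ?_
    simp only [id, mul_one]
    ring
  refine antitoneOn_of_hasDerivWithinAt_nonpos hD (fun t ht => (hg t ht).continuousWithinAt)
    (fun t ht => (hg t (interior_subset ht)).mono interior_subset) fun t ht => ?_
  exact mul_nonpos_of_nonneg_of_nonpos (Real.exp_pos _).le (hf' t ht)

theorem hasDerivWithinAt_bilinear_self (L : E →ₗ[ℝ] E →L[ℝ] ℝ) {C : ℝ}
    (hL : ∀ x y, L x y ≤ C * ‖x‖ * ‖y‖) {v : ℝ → E} {v' : E} {s : Set ℝ} {t : ℝ}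
    (hv : HasDerivWithinAt v v' s t) :
    HasDerivWithinAt (fun t => L (v t) (v t)) (L v' (v t) + L (v t) v') s t := by
  have habs : ∀ x y, ‖L x y‖ ≤ C * ‖x‖ * ‖y‖ := fun x y => by
    have hneg := hL x (-y)
    rw [map_neg, norm_neg] at hneg
    exact abs_le.mpr ⟨by linarith, hL x y⟩
  let B : E →L[ℝ] E →L[ℝ] ℝ := ((ContinuousLinearMap.coeLM ℝ).comp L).mkContinuous₂ C habs
  exact (B.hasFDerivAt.comp_hasDerivWithinAt t hv).clm_apply hv

theorem add_quadratic_le_of_strongMonotone_fderiv (L : E →ₗ[ℝ] E →L[ℝ] ℝ) {f : E → ℝ}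
    {f' : E → E →L[ℝ] ℝ} (hf : ∀ x, HasFDerivAt f (f' x) x) {μ : ℝ}
    (hmono : ∀ x y, μ * L (x - y) (x - y) ≤ (f' x - f' y) (x - y)) (x y : E) :
    f x + f' x (y - x) + μ / 2 * L (y - x) (y - x) ≤ f y := by
  set d := y - x
  set q := L d d
  let ψ : ℝ → ℝ := fun s => f (x + s • d) - s * f' x d - μ / 2 * s ^ 2 * q
  have hψ : ∀ s, HasDerivAt ψ (f' (x + s • d) d - f' x d - μ * s * q) s := fun s => by
    have hpath : HasDerivAt (fun s : ℝ => x + s • d) d s := by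
      simpa using ((hasDerivAt_id s).smul_const d).const_add x
    have hquad : HasDerivAt (fun s : ℝ => μ / 2 * s ^ 2 * q) (μ * s * q) s :=
      (((hasDerivAt_pow 2 s).const_mul (μ / 2)).mul_const q).congr_deriv (by ring)
    exact (((hf _).comp_hasDerivAt s hpath).sub
      (by simpa using (hasDerivAt_id s).mul_const (f' x d))).sub hquad
  have hψ_mono : MonotoneOn ψ (Icc 0 1) := by
    refine monotoneOn_of_hasDerivWithinAt_nonneg (convex_Icc 0 1)
      (fun s _ => (hψ s).continuousAt.continuousWithinAt)
      (fun s _ => (hψ s).hasDerivWithinAt) fun s hs => ?_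
    rw [interior_Icc] at hs
    have h := hmono (x + s • d) x
    simp only [add_sub_cancel_left, map_smul, smul_apply, sub_apply, smul_eq_mul] at h
    nlinarith [hs.1]
  have h01 := hψ_mono (left_mem_Icc.mpr zero_le_one) (right_mem_Icc.mpr zero_le_one) zero_le_one
  simp only [ψ, d, zero_smul, one_smul, add_zero, add_sub_cancel] at h01
  linarith

theorem lyapunov_rate_nonpos (L : E →ₗ[ℝ] E →L[ℝ] ℝ) (hsymm : ∀ x y, L x y = L y x)
    (hpos : ∀ x, 0 ≤ L x x) {f : E → ℝ} {g : E →L[ℝ] ℝ} {μ η : ℝ} (hη : η ≠ 0)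
    (hημ : η ^ 2 ≤ μ) {x y u a z : E} (hz : L z = g)
    (hlow : f x + g (y - x) + μ / 2 * L (y - x) (y - x) ≤ f y)
    (hode : a + (2 * η) • u + z = 0) :
    η * (η / 2 * L (x - y + (1 / η) • u) (x - y + (1 / η) • u) + 1 / η * (f x - f y)) +
      (η / 2 * (L (u + (1 / η) • a) (x - y + (1 / η) • u) +
        L (x - y + (1 / η) • u) (u + (1 / η) • a)) + 1 / η * g u) ≤ 0 := by
  have ha : a = -(2 * η) • u - z := by
    rw [neg_smul, ← neg_add', eq_neg_iff_add_eq_zero, ← add_assoc, hode]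
  have hv' : u + (1 / η) • a = -u - (1 / η) • z := by
    rw [ha, smul_sub, smul_smul, show 1 / η * -(2 * η) = -2 by field_simp]
    module
  set w := x - y
  have hyx : y - x = -w := (neg_sub x y).symm
  have hzw : L w z = g w := by rw [hsymm, hz]
  have hzu : L u z = g u := by rw [hsymm, hz]
  have hrate : η * (η / 2 * L (w + (1 / η) • u) (w + (1 / η) • u) + 1 / η * (f x - f y)) +
      (η / 2 * (L (-u - (1 / η) • z) (w + (1 / η) • u) +
        L (w + (1 / η) • u) (-u - (1 / η) • z)) + 1 / η * g u)
      = η ^ 2 / 2 * L w w - L u u / 2 + (f x - f y) - g w := by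
    rw [hsymm (-u - _)]
    simp only [map_add, map_sub, map_neg, map_smul, add_apply, smul_apply,
      smul_eq_mul, hzw, hzu, hsymm u w]
    field_simp
    ring
  rw [hv', hrate]
  simp only [hyx, map_neg, neg_apply, neg_neg] at hlow
  nlinarith [hpos u, mul_nonneg (sub_nonneg.mpr hημ) (hpos w)]

end

theorem IVP_lyapunov_exponential_decay_general
    {H : Type*} [NormedAddCommGroup H] [InnerProductSpace ℝ H]
    (L : H →ₗ[ℝ] (H →L[ℝ] ℝ))
    (C₁ C₂ : ℝ) (hC₁ : 0 < C₁)
    (hsymm : ∀ x y : H, L x y = L y x)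
    (hbdd : ∀ x y : H, L x y ≤ C₂ * ‖x‖ * ‖y‖)
    (hcoer : ∀ x : H, C₁ * ‖x‖ ^ 2 ≤ L x x)
    (Linv : (H →L[ℝ] ℝ) → H)
    (hLinv : ∀ f : H →L[ℝ] ℝ, L (Linv f) = f)
    (G : H → ℝ) (G' : H → H →L[ℝ] ℝ)
    (hdiff : ∀ x : H, HasFDerivAt G (G' x) x)
    (μ : ℝ)
    (hsc : ∀ x y : H, (G' x - G' y) (x - y) ≥ μ * L (x - y) (x - y))
    (xstar : H)
    (η : ℝ) (hη : 0 < η) (hη2 : η ^ 2 ≤ μ) (x₀ : H)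
    -- X is the (unique) twice continuously differentiable solution of the IVP
    (X X' X'' : ℝ → H)
    (hX1 : ∀ t ∈ Ici (0:ℝ), HasDerivWithinAt X (X' t) (Ici 0) t)
    (hX2 : ∀ t ∈ Ici (0:ℝ), HasDerivWithinAt X' (X'' t) (Ici 0) t)
    (hX0 : X 0 = x₀) (hX0' : X' 0 = 0)
    (hODE : ∀ t > (0:ℝ), X'' t + (2 * η) • X' t + Linv (G' (X t)) = 0)
    -- the auxiliary variable V
    (V : ℝ → H) (hV : ∀ t : ℝ, V t = X t - xstar + (1 / η) • X' t) :
    -- the inflated energy is nonincreasing ...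
    AntitoneOn (fun t : ℝ => Real.exp (η * t) *
        (η / 2 * L (V t) (V t) + 1 / η * (G (X t) - G xstar))) (Ici 0) ∧
    -- ... hence the Lyapunov function decays exponentially
    (∀ t ∈ Ici (0:ℝ),
      η / 2 * L (V t) (V t) + 1 / η * (G (X t) - G xstar)
        ≤ Real.exp (-(η * t)) *
            (1 / η * (G x₀ - G xstar) + η / 2 * L (x₀ - xstar) (x₀ - xstar))) := by
  have hpos : ∀ x, 0 ≤ L x x := fun x => (by positivity : 0 ≤ C₁ * ‖x‖ ^ 2).trans (hcoer x)
  have hV' : ∀ t ∈ Ici (0:ℝ), HasDerivWithinAt V (X' t + (1 / η) • X'' t) (Ici 0) t :=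
    fun t ht => (((hX1 t ht).sub_const xstar).add ((hX2 t ht).const_smul (1 / η))).congr
      (fun s _ => hV s) (hV t)
  have henergy : ∀ t ∈ Ici (0:ℝ), HasDerivWithinAt
      (fun t => η / 2 * L (V t) (V t) + 1 / η * (G (X t) - G xstar))
      (η / 2 * (L (X' t + (1 / η) • X'' t) (V t) + L (V t) (X' t + (1 / η) • X'' t))
        + 1 / η * G' (X t) (X' t)) (Ici 0) t := fun t ht =>
    ((hasDerivWithinAt_bilinear_self L hbdd (hV' t ht)).const_mul (η / 2)).add
      ((((hdiff (X t)).comp_hasDerivWithinAt t (hX1 t ht)).sub_const (G xstar)).const_mul (1 / η))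
  have hanti := antitoneOn_exp_mul_of_hasDerivWithinAt (convex_Ici 0) henergy fun t ht => by
    rw [interior_Ici] at ht
    rw [hV t]
    exact lyapunov_rate_nonpos L hsymm hpos hη.ne' hη2 (hLinv _)
      (add_quadratic_le_of_strongMonotone_fderiv L hdiff hsc (X t) xstar) (hODE t ht)
  refine ⟨hanti, fun t ht => ?_⟩
  have hdecay := hanti self_mem_Ici ht ht
  simp only [mul_zero, Real.exp_zero, one_mul, hV 0, hX0, hX0', smul_zero, add_zero] at hdecay
  rw [Real.exp_neg, inv_mul_eq_div, le_div_iff₀ (Real.exp_pos _)]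
  linarith

/-- exponential decay of the Lyapunov function along the solution
of `Ẍ + 2η Ẋ + 𝓛⁻¹G'(X) = 0`, `X(0) = x₀`, `Ẋ(0) = 0`, for `G` μ-strongly
convex, locally Lipschitz smooth in the strong sense, and `η² ≤ μ`.
With `V(t) = X(t) − x* + (1/η)Ẋ(t)`, the inflated energy
`t ↦ e^{ηt} E(X(t), V(t))` is nonincreasing on `[0,∞)`; consequently
`E(X(t),V(t)) = (η/2)‖V(t)‖_𝓛² + (1/η)(G(X(t)) − G*) ≤ e^{−ηt} E₀`. -/
theorem IVP_lyapunov_exponential_decay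
    {H : Type*} [NormedAddCommGroup H] [InnerProductSpace ℝ H]
    [CompleteSpace H] [SeparableSpace H]
    (L : H →ₗ[ℝ] (H →L[ℝ] ℝ))
    (C₁ C₂ : ℝ) (hC₁ : 0 < C₁) (hC₂ : 0 < C₂)
    (hsymm : ∀ x y : H, L x y = L y x)
    (hbdd : ∀ x y : H, L x y ≤ C₂ * ‖x‖ * ‖y‖)
    (hcoer : ∀ x : H, C₁ * ‖x‖ ^ 2 ≤ L x x)
    (Linv : (H →L[ℝ] ℝ) → H)
    (hLinv : ∀ f : H →L[ℝ] ℝ, L (Linv f) = f)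
    (hLinv' : ∀ x : H, Linv (L x) = x)
    (G : H → ℝ) (G' : H → H →L[ℝ] ℝ)
    (hdiff : ∀ x : H, HasFDerivAt G (G' x) x)
    (μ : ℝ) (hμ : 0 < μ)
    (hsc : ∀ x y : H, (G' x - G' y) (x - y) ≥ μ * L (x - y) (x - y))
    (hlip : ∀ B : Set H, Convex ℝ B → Bornology.IsBounded B →
      ∃ LB > (0:ℝ), ∀ x ∈ B, ∀ y ∈ B,
        Real.sqrt ((G' x - G' y) (Linv (G' x - G' y)))
          ≤ LB * Real.sqrt (L (x - y) (x - y)))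
    (xstar : H) (hmin : ∀ y : H, G xstar ≤ G y)
    (η : ℝ) (hη : 0 < η) (hη2 : η ^ 2 ≤ μ) (x₀ : H)
    -- X is the (unique) twice continuously differentiable solution of the IVP
    (X X' X'' : ℝ → H)
    (hX1 : ∀ t ∈ Ici (0:ℝ), HasDerivWithinAt X (X' t) (Ici 0) t)
    (hX2 : ∀ t ∈ Ici (0:ℝ), HasDerivWithinAt X' (X'' t) (Ici 0) t)
    (hX3 : ContinuousOn X'' (Ici 0))
    (hX0 : X 0 = x₀) (hX0' : X' 0 = 0)
    (hODE : ∀ t > (0:ℝ), X'' t + (2 * η) • X' t + Linv (G' (X t)) = 0)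
    -- the auxiliary variable V
    (V : ℝ → H) (hV : ∀ t : ℝ, V t = X t - xstar + (1 / η) • X' t) :
    -- the inflated energy is nonincreasing ...
    AntitoneOn (fun t : ℝ => Real.exp (η * t) *
        (η / 2 * L (V t) (V t) + 1 / η * (G (X t) - G xstar))) (Ici 0) ∧
    -- ... hence the Lyapunov function decays exponentially
    (∀ t ∈ Ici (0:ℝ),
      η / 2 * L (V t) (V t) + 1 / η * (G (X t) - G xstar)
        ≤ Real.exp (-(η * t)) *
            (1 / η * (G x₀ - G xstar) + η / 2 * L (x₀ - xstar) (x₀ - xstar))) :=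
  IVP_lyapunov_exponential_decay_general L C₁ C₂ hC₁ hsymm hbdd hcoer Linv hLinv G G' hdiff μ hsc
    xstar η hη hη2 x₀ X X' X'' hX1 hX2 hX0 hX0' hODE V hV
end

section
/- For every k ≥ 0, the PAGD iterates satisfy the four equivalent identities: y_k = (1/(1+θ)) x_k + (θ/(1+θ)) v_k; x_k = (1+θ) y_k − θ v_k; v_k = (1 + 1/θ) y_k − (1/θ) x_k; and x_k − y_k = θ(y_k − v_k). In particular, y_k lies on the line segment joining x_k and v_k. -/
open TopologicalSpace

/-! All four identities are rearrangements of `x_k - y_k = θ (y_k - v_k)`. For `k = 0` all three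
points coincide; for `k + 1`, substituting the definitions of `y_{k+1}` and `v_{k+1}` turns it into
an identity in `x_k, x_{k+1}` that holds exactly because `λ = (1 - θ)/(1 + θ)`. -/

section Rearrangements

variable {𝕜 E : Type*} [Field 𝕜] [AddCommGroup E] [Module 𝕜 E] {θ : 𝕜} {x y v : E}

theorem eq_add_smul_sub_smul_of_sub_eq_smul_sub (h : x - y = θ • (y - v)) :
    x = (1 + θ) • y - θ • v := by
  linear_combination (norm := module) h

theorem eq_div_smul_add_div_smul_of_sub_eq_smul_sub (h : x - y = θ • (y - v))
    (hθ : 1 + θ ≠ 0) : y = (1 / (1 + θ)) • x + (θ / (1 + θ)) • v := by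
  linear_combination (norm := skip) (-1 / (1 + θ)) • h
  match_scalars <;> field_simp <;> ring

theorem eq_smul_sub_smul_of_sub_eq_smul_sub (h : x - y = θ • (y - v)) (hθ : θ ≠ 0) :
    v = (1 + 1 / θ) • y - (1 / θ) • x := by
  linear_combination (norm := skip) (1 / θ) • h
  match_scalars <;> field_simp <;> ring

end Rearrangements

theorem mem_segment_of_sub_eq_smul_sub {𝕜 E : Type*} [Field 𝕜] [LinearOrder 𝕜]
    [IsStrictOrderedRing 𝕜] [AddCommGroup E] [Module 𝕜 E] {θ : 𝕜} {x y v : E}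
    (h : x - y = θ • (y - v)) (hθ : 0 ≤ θ) : y ∈ segment 𝕜 x v :=
  ⟨1 / (1 + θ), θ / (1 + θ), by positivity, by positivity, by field_simp,
    (eq_div_smul_add_div_smul_of_sub_eq_smul_sub h (by positivity)).symm⟩

theorem pagd_sub_eq_smul_sub {𝕜 E : Type*} [Field 𝕜] [AddCommGroup E] [Module 𝕜 E]
    {θ lam : 𝕜} (hlam : lam = (1 - θ) / (1 + θ)) (hθ : θ ≠ 0) (hθ' : 1 + θ ≠ 0)
    {x y v : ℕ → E} (hy : ∀ k, y k = x k + lam • (x k - x (k - 1))) (hv0 : v 0 = x 0)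
    (hv : ∀ k, v (k + 1) = x k + (1 / θ) • (x (k + 1) - x k)) (k : ℕ) :
    x k - y k = θ • (y k - v k) := by
  cases k with
  | zero => simp [hy 0, hv0]
  | succ k =>
    rw [hy, hv, Nat.add_sub_cancel, hlam]
    match_scalars <;> field_simp <;> ring

theorem PAGD_convex_hull_identities_general
    {H : Type*} [NormedAddCommGroup H] [InnerProductSpace ℝ H]
    -- PAGD parameters: step size s, friction η, θ = η√s, λ = (1−θ)/(1+θ)
    (θ lam : ℝ) (hlam : lam = (1 - θ) / (1 + θ))
    (hθ0 : 0 < θ)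
    -- PAGD iterates (with the convention x₋₁ = x₀, realized by ℕ-subtraction)
    (x y v : ℕ → H)
    (hy : ∀ k : ℕ, y k = x k + lam • (x k - x (k - 1)))
    (hv0 : v 0 = x 0)
    (hv : ∀ k : ℕ, v (k + 1) = x k + (1 / θ) • (x (k + 1) - x k)) :
    ∀ k : ℕ,
      y k = (1 / (1 + θ)) • x k + (θ / (1 + θ)) • v k ∧
      x k = (1 + θ) • y k - θ • v k ∧
      v k = (1 + 1 / θ) • y k - (1 / θ) • x k ∧
      x k - y k = θ • (y k - v k) ∧
      y k ∈ segment ℝ (x k) (v k) := by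
  intro k
  have h := pagd_sub_eq_smul_sub hlam hθ0.ne' (by positivity) hy hv0 hv k
  exact ⟨eq_div_smul_add_div_smul_of_sub_eq_smul_sub h (by positivity),
    eq_add_smul_sub_smul_of_sub_eq_smul_sub h, eq_smul_sub_smul_of_sub_eq_smul_sub h hθ0.ne', h,
    mem_segment_of_sub_eq_smul_sub h hθ0.le⟩

/-- the PAGD iterates (with `0 < θ < 1`) satisfy the four
equivalent identities
`y_k = (1/(1+θ)) x_k + (θ/(1+θ)) v_k`, `x_k = (1+θ) y_k − θ v_k`,
`v_k = (1 + 1/θ) y_k − (1/θ) x_k`, `x_k − y_k = θ(y_k − v_k)`;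
in particular `y_k` lies on the segment joining `x_k` and `v_k`. -/
theorem PAGD_convex_hull_identities
    {H : Type*} [NormedAddCommGroup H] [InnerProductSpace ℝ H]
    [CompleteSpace H] [SeparableSpace H]
    (L : H →ₗ[ℝ] (H →L[ℝ] ℝ))
    (C₁ C₂ : ℝ) (hC₁ : 0 < C₁) (hC₂ : 0 < C₂)
    (hsymm : ∀ x y : H, L x y = L y x)
    (hbdd : ∀ x y : H, L x y ≤ C₂ * ‖x‖ * ‖y‖)
    (hcoer : ∀ x : H, C₁ * ‖x‖ ^ 2 ≤ L x x)
    (Linv : (H →L[ℝ] ℝ) → H)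
    (hLinv : ∀ f : H →L[ℝ] ℝ, L (Linv f) = f)
    (hLinv' : ∀ x : H, Linv (L x) = x)
    (G : H → ℝ) (G' : H → H →L[ℝ] ℝ)
    (hdiff : ∀ x : H, HasFDerivAt G (G' x) x)
    -- PAGD parameters: step size s, friction η, θ = η√s, λ = (1−θ)/(1+θ)
    (s η θ lam : ℝ) (hs : 0 < s) (hη : 0 < η)
    (hθ : θ = η * Real.sqrt s) (hlam : lam = (1 - θ) / (1 + θ))
    (hθ0 : 0 < θ) (hθ1 : θ < 1)
    -- PAGD iterates (with the convention x₋₁ = x₀, realized by ℕ-subtraction)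
    (x y v : ℕ → H)
    (hy : ∀ k : ℕ, y k = x k + lam • (x k - x (k - 1)))
    (hx : ∀ k : ℕ, x (k + 1) = y k - s • Linv (G' (y k)))
    (hv0 : v 0 = x 0)
    (hv : ∀ k : ℕ, v (k + 1) = x k + (1 / θ) • (x (k + 1) - x k)) :
    ∀ k : ℕ,
      y k = (1 / (1 + θ)) • x k + (θ / (1 + θ)) • v k ∧
      x k = (1 + θ) • y k - θ • v k ∧
      v k = (1 + 1 / θ) • y k - (1 / θ) • x k ∧
      x k - y k = θ • (y k - v k) ∧
      y k ∈ segment ℝ (x k) (v k) :=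
  PAGD_convex_hull_identities_general θ lam hlam hθ0 x y v hy hv0 hv
end

section
/- Assume G : H → ℝ is μ-strongly convex and locally Lipschitz smooth, with minimizer x* and minimum G*. Fix r > 1 and set R₁ := √((2/μ)(G(x₀) − G*)), R₂ := √(2r(G(x₀) − G*)), R := R₁ + R₂/η, and 𝔅 := {x ∈ H : ‖x − x*‖_𝓛 ≤ R}, where η = √μ. Let L_B be a Lipschitz smoothness constant of G on 𝔅, and run PAGD with friction η = √μ and step size s ∈ (0, min{1/L_B, ((r−1)/(r+1))²/μ}]. Then, for all k ≥ 0, ‖x_k − x*‖_𝓛 ≤ R₁ (in particular x_k ∈ 𝔅), and y_k ∈ 𝔅 and v_k ∈ 𝔅; that is, 𝔅 is an invariant set for PAGD. -/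
open Set TopologicalSpace

/-!
The iterates are controlled by the discrete energy
`E_k = G(x_k) + (1-θ)²/(2s) ‖x_k - x_{k-1}‖²_𝓛`, which does not increase as long as `y_k` and
`x_{k+1}` lie in `𝔅`, where the descent lemma with constant `L_B` is available. From
`E_k ≤ G(x₀)`, strong convexity gives `‖x_k - x*‖_𝓛 ≤ R₁` and the kinetic term gives
`(1-θ) ‖x_k - x_{k-1}‖_𝓛 ≤ θ R₁` (as `θ² = μ s`); hence `‖y_k - x*‖_𝓛 < 2 R₁` and
`‖v_k - x*‖_𝓛 ≤ 2 R₁`, and `2 R₁ ≤ R` because `r > 1`. The gradient step from `y_k` stays in `𝔅`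
by a continuity argument: while the path `t ↦ y_k - t 𝓛⁻¹G'(y_k)`, `0 ≤ t ≤ s`, is in `𝔅`, the
descent lemma and the minimality of `G*` prevent its distance to `x*` from growing, so it never
reaches the boundary.
-/

section FormSeminorm

variable {H : Type*} [NormedAddCommGroup H] [NormedSpace ℝ H] {L : H →ₗ[ℝ] H →L[ℝ] ℝ}

theorem apply_sq_le_of_symm (hsymm : ∀ x y, L x y = L y x) (hpos : ∀ x, 0 ≤ L x x) (x y : H) :
    L x y ^ 2 ≤ L x x * L y y := by
  have := LinearMap.BilinForm.apply_mul_apply_le_of_forall_zero_le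
    ((ContinuousLinearMap.coeLM ℝ) ∘ₗ L) hpos x y
  simpa [sq, ← hsymm x y] using this

theorem sqrt_apply_add_le (hsymm : ∀ x y, L x y = L y x) (hpos : ∀ x, 0 ≤ L x x) (x y : H) :
    √(L (x + y) (x + y)) ≤ √(L x x) + √(L y y) := by
  have hcs : L x y ≤ √(L x x) * √(L y y) := by
    rw [← Real.sqrt_mul (hpos x)]
    exact Real.le_sqrt_of_sq_le (apply_sq_le_of_symm hsymm hpos x y)
  rw [Real.sqrt_le_left (by positivity), add_sq, Real.sq_sqrt (hpos x), Real.sq_sqrt (hpos y)]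
  simp only [map_add, add_apply, hsymm y x]
  linarith

theorem sqrt_apply_smul (a : ℝ) (x : H) : √(L (a • x) (a • x)) = ‖a‖ * √(L x x) := by
  simp only [map_smul, smul_apply, smul_eq_mul, ← mul_assoc, ← sq]
  rw [Real.sqrt_mul (sq_nonneg a), Real.sqrt_sq_eq_abs, Real.norm_eq_abs]

noncomputable def formSeminorm (L : H →ₗ[ℝ] H →L[ℝ] ℝ) (hsymm : ∀ x y, L x y = L y x)
    (hpos : ∀ x, 0 ≤ L x x) : Seminorm ℝ H :=
  Seminorm.of (fun z => √(L z z)) (sqrt_apply_add_le hsymm hpos) sqrt_apply_smul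

theorem formSeminorm_sq (hsymm : ∀ x y, L x y = L y x) (hpos : ∀ x, 0 ≤ L x x) (z : H) :
    formSeminorm L hsymm hpos z ^ 2 = L z z :=
  Real.sq_sqrt (hpos z)

theorem apply_le_mul_of_sq_eq (hsymm : ∀ x y, L x y = L y x) {p : Seminorm ℝ H}
    (hp : ∀ z, p z ^ 2 = L z z) (x y : H) : L x y ≤ p x * p y := by
  have hpos : ∀ z, 0 ≤ L z z := fun z => hp z ▸ sq_nonneg _
  refine le_of_abs_le (abs_le_of_sq_le_sq ?_ (by positivity))
  rw [mul_pow, hp, hp]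
  exact apply_sq_le_of_symm hsymm hpos x y

theorem apply_sub_self (hsymm : ∀ x y, L x y = L y x) (a b : H) :
    L (a - b) (a - b) = L a a - 2 * L b a + L b b := by
  simp only [map_sub, sub_apply, hsymm a b]
  ring

end FormSeminorm

section Descent

variable {E : Type*} [NormedAddCommGroup E] [NormedSpace ℝ E]

theorem Convex.descent_lemma {S : Set E} (hS : Convex ℝ S)
    {G : E → ℝ} {G' : E → E →L[ℝ] ℝ} (hG : ∀ x ∈ S, HasFDerivAt G (G' x) x)
    (L : E →ₗ[ℝ] E →L[ℝ] ℝ) {K : ℝ}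
    (hK : ∀ x ∈ S, ∀ y ∈ S, (G' x - G' y) (x - y) ≤ K * L (x - y) (x - y))
    {u w : E} (hu : u ∈ S) (hw : w ∈ S) :
    G u ≤ G w + G' w (u - w) + K / 2 * L (u - w) (u - w) := by
  set z := u - w
  let φ : ℝ → ℝ := fun t => G (w + t • z) - t * G' w z - K / 2 * t ^ 2 * L z z
  have hmem : ∀ t ∈ Icc (0 : ℝ) 1, w + t • z ∈ S := fun t ht =>
    hS.add_smul_sub_mem hw hu ht
  have hφ : ∀ t ∈ Icc (0 : ℝ) 1,
      HasDerivAt φ (G' (w + t • z) z - G' w z - K * t * L z z) t := by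
    intro t ht
    have hline : HasDerivAt (fun t : ℝ => w + t • z) z t := by
      simpa using ((hasDerivAt_id t).smul_const z).const_add w
    have := (((hG _ (hmem t ht)).comp_hasDerivAt t hline).sub
      ((hasDerivAt_id t).mul_const (G' w z))).sub
      (((hasDerivAt_pow 2 t).const_mul (K / 2)).mul_const (L z z))
    exact this.congr_deriv (by ring)
  have hφ' : ∀ t ∈ Ioo (0 : ℝ) 1, G' (w + t • z) z - G' w z - K * t * L z z ≤ 0 := by
    intro t ht
    have h := hK _ (hmem t (Ioo_subset_Icc_self ht)) w hw
    simp only [add_sub_cancel_left, map_smul, sub_apply, smul_apply, smul_eq_mul] at h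
    nlinarith [ht.1]
  have hanti : AntitoneOn φ (Icc 0 1) := by
    refine antitoneOn_of_hasDerivWithinAt_nonpos (convex_Icc 0 1)
      (f' := fun t => G' (w + t • z) z - G' w z - K * t * L z z)
      (fun t ht => (hφ t ht).continuousAt.continuousWithinAt) (fun t ht => ?_) (fun t ht => ?_)
    · rw [interior_Icc] at ht
      exact (hφ t (Ioo_subset_Icc_self ht)).hasDerivWithinAt
    · rw [interior_Icc] at ht
      exact hφ' t ht
  have := hanti (left_mem_Icc.2 zero_le_one) (right_mem_Icc.2 zero_le_one) zero_le_one
  simp only [φ, one_smul, zero_smul, add_zero, z, add_sub_cancel] at this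
  linarith

theorem le_of_strongMonotone_fderiv {G : E → ℝ} {G' : E → E →L[ℝ] ℝ}
    (hG : ∀ x, HasFDerivAt G (G' x) x) (L : E →ₗ[ℝ] E →L[ℝ] ℝ) {μ : ℝ}
    (hμ : ∀ x y, μ * L (x - y) (x - y) ≤ (G' x - G' y) (x - y)) (u w : E) :
    G w + G' w (u - w) + μ / 2 * L (u - w) (u - w) ≤ G u := by
  have := convex_univ.descent_lemma (G := -G) (G' := -G') (fun x _ => (hG x).neg) L (K := -μ)
    (fun x _ y _ => by
      rw [Pi.neg_apply, Pi.neg_apply, neg_sub_neg, ← neg_sub, neg_apply]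
      linarith [hμ x y])
    (mem_univ u) (mem_univ w)
  simp only [Pi.neg_apply, neg_apply] at this
  linarith

end Descent

theorem ContinuousOn.apply_le_apply_left_of_forall_le_imp_le {F : ℝ → ℝ} {a b M : ℝ}
    (hab : a ≤ b) (hF : ContinuousOn F (Icc a b)) (haM : F a < M)
    (h : ∀ t ∈ Icc a b, F t ≤ M → F t ≤ F a) :
    F b ≤ F a := by
  by_contra! hb
  have hMb : M < F b := lt_of_not_ge fun hbM => (h b (right_mem_Icc.2 hab) hbM).not_gt hb
  obtain ⟨t, ht, hFt⟩ := intermediate_value_Icc hab hF ⟨haM.le, hMb.le⟩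
  linarith [h t ht hFt.le]

section PAGD

variable {H : Type*} [NormedAddCommGroup H] [NormedSpace ℝ H] {L : H →ₗ[ℝ] H →L[ℝ] ℝ}
  {G : H → ℝ} {G' : H → H →L[ℝ] ℝ} {p : Seminorm ℝ H}

theorem apply_gradient_step_le {S : Set H} {K : ℝ}
    (hdesc : ∀ u ∈ S, ∀ w ∈ S, G u ≤ G w + G' w (u - w) + K / 2 * L (u - w) (u - w))
    (hpos : ∀ z, 0 ≤ L z z) {y g : H} (hg : L g = G' y) {t : ℝ} (ht : 0 ≤ t)
    (hKt : K * t ≤ 1)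
    (hy : y ∈ S) (hyt : y - t • g ∈ S) :
    G (y - t • g) ≤ G y - t / 2 * L g g := by
  have h := hdesc _ hyt y hy
  simp only [sub_sub_cancel_left, ← hg, map_neg, map_smul, neg_apply, smul_apply,
    smul_eq_mul] at h
  nlinarith [mul_nonneg ht (hpos g), mul_nonneg (mul_nonneg ht ht) (hpos g)]

theorem gradient_step_dist_le_of_lt (hsymm : ∀ x y, L x y = L y x)
    (hp : ∀ z, p z ^ 2 = L z z) {xstar : H} (hmin : ∀ z, G xstar ≤ G z) {R K s : ℝ}
    (hdesc : ∀ u ∈ p.closedBall xstar R, ∀ w ∈ p.closedBall xstar R,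
      G u ≤ G w + G' w (u - w) + K / 2 * L (u - w) (u - w))
    (hs : 0 ≤ s) (hKs : K * s ≤ 1) {y g : H} (hg : L g = G' y)
    (hgap : G y - G xstar ≤ L g (y - xstar)) (hyR : p (y - xstar) < R) :
    p (y - s • g - xstar) ≤ p (y - xstar) := by
  let F : ℝ → ℝ := fun t =>
    L (y - xstar) (y - xstar) - 2 * t * L g (y - xstar) + t ^ 2 * L g g
  have hF (t : ℝ) : p (y - t • g - xstar) ^ 2 = F t := by
    rw [hp, show y - t • g - xstar = (y - xstar) - t • g by abel, apply_sub_self hsymm]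
    simp only [F, map_smul, smul_apply, smul_eq_mul]
    ring
  have hF0 : p (y - xstar) ^ 2 = F 0 := by simpa using hF 0
  have hR : 0 ≤ R := (apply_nonneg p _).trans hyR.le
  -- Where `y - t • g` is in the ball, `G xstar ≤ G (y - t • g) ≤ G y - t / 2 * L g g` and `hgap`
  -- give `t * L g g ≤ 2 * L g (y - xstar)`, that is `F t ≤ F 0`.
  have hFs : F s ≤ F 0 := by
    refine ContinuousOn.apply_le_apply_left_of_forall_le_imp_le hs (by fun_prop) (M := R ^ 2)
      (by rw [← hF0]; gcongr) fun t ht hFt => ?_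
    have hmem : y - t • g ∈ p.closedBall xstar R := by
      rwa [Seminorm.mem_closedBall, ← pow_le_pow_iff_left₀ (apply_nonneg p _) hR two_ne_zero,
        hF]
    have hKt : K * t ≤ 1 := by
      rcases le_total K 0 with hK | hK <;> nlinarith [ht.1, ht.2]
    have hstep := apply_gradient_step_le hdesc (fun z => hp z ▸ sq_nonneg _) hg ht.1 hKt
      ((Seminorm.mem_closedBall _).2 hyR.le) hmem
    have := hmin (y - t • g)
    simp only [F]
    nlinarith [ht.1]
  rwa [← pow_le_pow_iff_left₀ (apply_nonneg p _) (apply_nonneg p _) two_ne_zero, hF, hF0]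

theorem gradient_step_dist_le (hsymm : ∀ x y, L x y = L y x)
    (hp : ∀ z, p z ^ 2 = L z z) {xstar : H} (hmin : ∀ z, G xstar ≤ G z) {R K s : ℝ}
    (hdesc : ∀ u ∈ p.closedBall xstar R, ∀ w ∈ p.closedBall xstar R,
      G u ≤ G w + G' w (u - w) + K / 2 * L (u - w) (u - w))
    (hs : 0 ≤ s) (hKs : K * s ≤ 1) {y g : H} (hGy : HasFDerivAt G (G' y) y) (hg : L g = G' y)
    (hconv : G y + G' y (xstar - y) ≤ G xstar) (hy : p (y - xstar) < R ∨ p (y - xstar) = 0) :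
    p (y - s • g - xstar) ≤ p (y - xstar) := by
  have hgap : G y - G xstar ≤ L g (y - xstar) := by
    rw [← neg_sub, map_neg, ← hg] at hconv
    linarith
  rcases hy with hyR | hy0
  · exact gradient_step_dist_le_of_lt hsymm hp hmin hdesc hs hKs hg hgap hyR
  have hymin : IsLocalMin G y := Filter.Eventually.of_forall fun z => by
    have := apply_le_mul_of_sq_eq hsymm hp g (y - xstar)
    rw [hy0, mul_zero] at this
    linarith [hmin z]
  have hg0 : p g = 0 := by
    rw [← sq_eq_zero_iff, hp, hg, hymin.hasFDerivAt_eq_zero hGy, zero_apply]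
  calc p (y - s • g - xstar) = p ((y - xstar) - s • g) := by rw [sub_right_comm]
    _ ≤ p (y - xstar) + p (s • g) := map_sub_le_add p _ _
    _ = p (y - xstar) := by rw [map_smul_eq_mul, hg0, mul_zero, add_zero]

theorem energy_step_le (hsymm : ∀ x y, L x y = L y x) (hpos : ∀ z, 0 ≤ L z z)
    {μ s θ lam : ℝ} (hs : 0 < s) (hθ0 : 0 ≤ θ) (hθ1 : θ ≤ 1) (hθs : θ ^ 2 = μ * s)
    (hlam : lam * (1 + θ) = 1 - θ) {x d y g x' : H} (hy : y = x + lam • d)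
    (hx' : x' = y - s • g) (hg : L g = G' y) (hdesc : G x' ≤ G y - s / 2 * L g g)
    (hsc : G y + G' y (x - y) + μ / 2 * L (x - y) (x - y) ≤ G x) :
    G x' + (1 - θ) ^ 2 / (2 * s) * L (x' - x) (x' - x)
      ≤ G x + (1 - θ) ^ 2 / (2 * s) * L d d := by
  have hlam1 : lam ≤ 1 := by nlinarith
  have hN : L (x' - x) (x' - x) = lam ^ 2 * L d d - 2 * lam * s * L g d + s ^ 2 * L g g := by
    rw [hx', hy, show x + lam • d - s • g - x = lam • d - s • g by abel,
      apply_sub_self hsymm]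
    simp only [map_smul, smul_apply, smul_eq_mul]
    ring
  have hxy : x - y = -(lam • d) := by rw [hy]; abel
  rw [hxy, ← hg] at hsc
  simp only [map_neg, neg_apply, map_smul, smul_apply, smul_eq_mul] at hsc
  have hdefect : (1 - θ) ^ 2 * L (x' - x) (x' - x) + 2 * s * (lam * L g d - μ / 2 * lam ^ 2 * L d d
      - s / 2 * L g g) = (1 - θ) ^ 2 * L d d - θ * (2 - θ) * L (x' - x) (x' - x)
        - (1 - lam) * (1 - θ) ^ 2 * L d d := by
    rw [hN]
    linear_combination (L d d * lam * (1 - θ)) * hlam + (L d d * lam ^ 2) * hθs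
  have hscaled : (1 - θ) ^ 2 / (2 * s) * L (x' - x) (x' - x) + (lam * L g d
      - μ / 2 * lam ^ 2 * L d d - s / 2 * L g g) ≤ (1 - θ) ^ 2 / (2 * s) * L d d := by
    have hN0 := hpos (x' - x)
    have hD0 := hpos d
    have : 0 ≤ θ * (2 - θ) * L (x' - x) (x' - x) + (1 - lam) * (1 - θ) ^ 2 * L d d := by
      have : 0 ≤ 2 - θ := by linarith
      have : 0 ≤ 1 - lam := by linarith
      positivity
    rw [← mul_le_mul_iff_right₀ (by positivity : (0 : ℝ) < 2 * s)]
    field_simp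
    linarith
  linarith

theorem dist_le_of_energy_le (hp : ∀ z, p z ^ 2 = L z z) {μ s θ E₀ : ℝ} (hμ : 0 < μ)
    (hs : 0 < s) (hθ0 : 0 ≤ θ) (hθs : θ ^ 2 = μ * s) {x d xstar : H}
    (hquad : G xstar + μ / 2 * L (x - xstar) (x - xstar) ≤ G x)
    (hE : G x + (1 - θ) ^ 2 / (2 * s) * L d d ≤ E₀) :
    p (x - xstar) ≤ √(2 / μ * (E₀ - G xstar)) ∧
      (1 - θ) * p d ≤ θ * √(2 / μ * (E₀ - G xstar)) := by
  have hd : 0 ≤ (1 - θ) ^ 2 / (2 * s) * L d d := by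
    have := hp d ▸ sq_nonneg (p d)
    positivity
  have hx : μ / 2 * L (x - xstar) (x - xstar) ≤ E₀ - G xstar := by linarith
  have hA : 0 ≤ 2 / μ * (E₀ - G xstar) := by
    have := hp (x - xstar) ▸ sq_nonneg (p (x - xstar))
    have : 0 ≤ E₀ - G xstar := by nlinarith
    positivity
  constructor
  · refine Real.le_sqrt_of_sq_le ?_
    rw [hp, div_mul_eq_mul_div, le_div_iff₀ hμ]
    linarith
  · refine le_of_abs_le (abs_le_of_sq_le_sq ?_ (by positivity))
    have hdE : (1 - θ) ^ 2 / (2 * s) * L d d ≤ E₀ - G xstar := by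
      nlinarith [hp (x - xstar) ▸ sq_nonneg (p (x - xstar))]
    rw [div_mul_eq_mul_div, div_le_iff₀ (by positivity)] at hdE
    rw [mul_pow, mul_pow, hp, Real.sq_sqrt hA, hθs,
      show μ * s * (2 / μ * (E₀ - G xstar)) = (E₀ - G xstar) * (2 * s) by field_simp]
    exact hdE

theorem dist_add_smul_lt_or_eq_zero {θ lam R₁ R : ℝ} (hθ0 : 0 ≤ θ) (hθ1 : θ ≤ 1)
    (hlam : lam * (1 + θ) = 1 - θ) (hR : 2 * R₁ ≤ R) {x d xstar : H}
    (hx : p (x - xstar) ≤ R₁) (hd : (1 - θ) * p d ≤ θ * R₁) :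
    p (x + lam • d - xstar) < R ∨ p (x + lam • d - xstar) = 0 := by
  have hlam0 : 0 ≤ lam := by nlinarith
  have htri : p (x + lam • d - xstar) ≤ p (x - xstar) + lam * p d :=
    calc p (x + lam • d - xstar) = p ((x - xstar) + lam • d) := by rw [add_sub_right_comm]
      _ ≤ p (x - xstar) + p (lam • d) := map_add_le_add p _ _
      _ = p (x - xstar) + lam * p d := by rw [map_smul_eq_mul, Real.norm_of_nonneg hlam0]
  have hstep : (1 + θ) * (lam * p d) ≤ θ * R₁ := by rw [← hlam] at hd; linarith
  rcases (apply_nonneg p _ |>.trans hx).eq_or_lt with hR₁ | hR₁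
  · right
    subst hR₁
    have : lam * p d ≤ 0 := by nlinarith
    exact le_antisymm (by linarith) (apply_nonneg p _)
  · left
    have : lam * p d < R₁ := by nlinarith
    linarith

theorem dist_add_inv_smul_le {θ R₁ : ℝ} (hθ0 : 0 < θ) (hθ1 : θ ≤ 1) {x x' xstar : H}
    (hx' : p (x' - xstar) ≤ R₁) (hd : (1 - θ) * p (x' - x) ≤ θ * R₁) :
    p (x + (1 / θ) • (x' - x) - xstar) ≤ 2 * R₁ := by
  have hc : 0 ≤ (1 - θ) / θ := div_nonneg (by linarith) hθ0.le
  have hcd : (1 - θ) / θ * p (x' - x) ≤ R₁ := by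
    rw [div_mul_eq_mul_div, div_le_iff₀ hθ0]; linarith
  calc p (x + (1 / θ) • (x' - x) - xstar) = p ((x' - xstar) + ((1 - θ) / θ) • (x' - x)) := by
        congr 1
        rw [show (1 - θ) / θ = 1 / θ - 1 by field_simp, sub_smul, one_smul]
        abel
    _ ≤ p (x' - xstar) + (1 - θ) / θ * p (x' - x) := by
        grw [map_add_le_add, map_smul_eq_mul, Real.norm_of_nonneg hc]
    _ ≤ 2 * R₁ := by linarith

theorem PAGD_energy_le (hsymm : ∀ x y, L x y = L y x) (hp : ∀ z, p z ^ 2 = L z z)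
    (hdiff : ∀ z, HasFDerivAt G (G' z) z) {μ : ℝ} (hμ : 0 < μ)
    (hG : ∀ u w, G w + G' w (u - w) + μ / 2 * L (u - w) (u - w) ≤ G u)
    {xstar : H} (hmin : ∀ z, G xstar ≤ G z) {R K : ℝ}
    (hdesc : ∀ u ∈ p.closedBall xstar R, ∀ w ∈ p.closedBall xstar R,
      G u ≤ G w + G' w (u - w) + K / 2 * L (u - w) (u - w))
    {s θ lam : ℝ} (hs : 0 < s) (hKs : K * s ≤ 1) (hθ0 : 0 ≤ θ) (hθ1 : θ ≤ 1)
    (hθs : θ ^ 2 = μ * s) (hlam : lam * (1 + θ) = 1 - θ) {x y g : ℕ → H}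
    (hR : 2 * √(2 / μ * (G (x 0) - G xstar)) ≤ R)
    (hy : ∀ k, y k = x k + lam • (x k - x (k - 1))) (hx : ∀ k, x (k + 1) = y k - s • g k)
    (hg : ∀ k, L (g k) = G' (y k)) (k : ℕ) :
    G (x k) + (1 - θ) ^ 2 / (2 * s) * L (x k - x (k - 1)) (x k - x (k - 1)) ≤ G (x 0) := by
  have hpos : ∀ z, 0 ≤ L z z := fun z => hp z ▸ sq_nonneg _
  have hG'star : G' xstar = 0 :=
    IsLocalMin.hasFDerivAt_eq_zero (Filter.Eventually.of_forall hmin) (hdiff xstar)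
  have hR0 : 0 ≤ R := le_trans (by positivity) hR
  induction k with
  | zero => simp
  | succ k ih =>
    obtain ⟨hxk, hdk⟩ := dist_le_of_energy_le hp hμ hs hθ0 hθs
      (by simpa [hG'star] using hG (x k) xstar) ih
    have hyk := dist_add_smul_lt_or_eq_zero hθ0 hθ1 hlam hR hxk hdk
    rw [← hy k] at hyk
    have hyB : y k ∈ p.closedBall xstar R :=
      (Seminorm.mem_closedBall _).2 (hyk.elim le_of_lt fun h => h ▸ hR0)
    have hconv : G (y k) + G' (y k) (xstar - y k) ≤ G xstar := by
      nlinarith [hG xstar (y k), hpos (xstar - y k)]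
    have hxB : x (k + 1) ∈ p.closedBall xstar R := by
      rw [Seminorm.mem_closedBall, hx k]
      exact (gradient_step_dist_le hsymm hp hmin hdesc hs.le hKs (hdiff _) (hg k) hconv hyk).trans
        ((Seminorm.mem_closedBall _).1 hyB)
    have hdescent := apply_gradient_step_le hdesc hpos (hg k) hs.le hKs hyB (hx k ▸ hxB)
    rw [← hx k] at hdescent
    have := energy_step_le hsymm hpos hs hθ0 hθ1 hθs hlam (hy k) (hx k) (hg k) hdescent
      (hG (x k) (y k))
    rw [Nat.add_sub_cancel]
    linarith

theorem PAGD_mem_closedBall (hsymm : ∀ x y, L x y = L y x) (hp : ∀ z, p z ^ 2 = L z z)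
    (hdiff : ∀ z, HasFDerivAt G (G' z) z) {μ : ℝ} (hμ : 0 < μ)
    (hG : ∀ u w, G w + G' w (u - w) + μ / 2 * L (u - w) (u - w) ≤ G u)
    {xstar : H} (hmin : ∀ z, G xstar ≤ G z) {R K : ℝ}
    (hdesc : ∀ u ∈ p.closedBall xstar R, ∀ w ∈ p.closedBall xstar R,
      G u ≤ G w + G' w (u - w) + K / 2 * L (u - w) (u - w))
    {s θ lam : ℝ} (hs : 0 < s) (hKs : K * s ≤ 1) (hθ0 : 0 < θ) (hθ1 : θ ≤ 1)
    (hθs : θ ^ 2 = μ * s) (hlam : lam * (1 + θ) = 1 - θ) {x y g v : ℕ → H} {R₁ : ℝ}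
    (hR₁ : R₁ = √(2 / μ * (G (x 0) - G xstar))) (hR : 2 * R₁ ≤ R)
    (hy : ∀ k, y k = x k + lam • (x k - x (k - 1))) (hx : ∀ k, x (k + 1) = y k - s • g k)
    (hg : ∀ k, L (g k) = G' (y k)) (hv0 : v 0 = x 0)
    (hv : ∀ k, v (k + 1) = x k + (1 / θ) • (x (k + 1) - x k)) (k : ℕ) :
    p (x k - xstar) ≤ R₁ ∧ y k ∈ p.closedBall xstar R ∧ v k ∈ p.closedBall xstar R := by
  have hG'star : G' xstar = 0 :=
    IsLocalMin.hasFDerivAt_eq_zero (Filter.Eventually.of_forall hmin) (hdiff xstar)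
  have hbound (j : ℕ) :
      p (x j - xstar) ≤ R₁ ∧ (1 - θ) * p (x j - x (j - 1)) ≤ θ * R₁ :=
    hR₁ ▸ dist_le_of_energy_le hp hμ hs hθ0.le hθs (by simpa [hG'star] using hG (x j) xstar)
      (PAGD_energy_le hsymm hp hdiff hμ hG hmin hdesc hs hKs hθ0.le hθ1 hθs hlam (hR₁ ▸ hR)
        hy hx hg j)
  have hR₁0 : 0 ≤ R₁ := hR₁ ▸ Real.sqrt_nonneg _
  refine ⟨(hbound k).1, (Seminorm.mem_closedBall _).2 ?_, (Seminorm.mem_closedBall _).2 ?_⟩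
  · rcases dist_add_smul_lt_or_eq_zero hθ0.le hθ1 hlam hR (hbound k).1 (hbound k).2 with h | h
      <;> rw [hy k] <;> linarith
  · cases k with
    | zero => rw [hv0]; linarith [(hbound 0).1]
    | succ k =>
      have := dist_add_inv_smul_le hθ0 hθ1 (hbound (k + 1)).1 (hbound (k + 1)).2
      rw [Nat.add_sub_cancel] at this
      rw [hv k]
      linarith

end PAGD

theorem PAGD_parameters {μ s r LB η θ lam : ℝ} (hμ : 0 < μ) (hs : 0 < s) (hr : 1 < r)
    (hs' : s ≤ min (1 / LB) (((r - 1) / (r + 1)) ^ 2 / μ)) (hη : η = √μ)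
    (hθ : θ = η * √s) (hlam : lam = (1 - θ) / (1 + θ)) :
    LB * s ≤ 1 ∧ 0 < θ ∧ θ ≤ 1 ∧ θ ^ 2 = μ * s ∧ lam * (1 + θ) = 1 - θ := by
  have hθ0 : 0 < θ := by rw [hθ, hη]; exact mul_pos (Real.sqrt_pos.2 hμ) (Real.sqrt_pos.2 hs)
  have hθs : θ ^ 2 = μ * s := by rw [hθ, hη, mul_pow, Real.sq_sqrt hμ.le, Real.sq_sqrt hs.le]
  refine ⟨?_, hθ0, ?_, hθs, by rw [hlam]; field_simp⟩
  · have hLB : s ≤ 1 / LB := hs'.trans (min_le_left _ _)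
    have : 0 < LB := one_div_pos.1 (hs.trans_le hLB)
    rwa [le_div_iff₀ this, mul_comm] at hLB
  · have hsμ : μ * s ≤ ((r - 1) / (r + 1)) ^ 2 := by
      rw [← le_div_iff₀' hμ]; exact hs'.trans (min_le_right _ _)
    have : (r - 1) / (r + 1) ≤ 1 := by rw [div_le_one (by linarith)]; linarith
    have : 0 ≤ (r - 1) / (r + 1) := div_nonneg (by linarith) (by linarith)
    nlinarith

theorem two_mul_le_PAGD_radius {μ r A R₁ R₂ η R : ℝ} (hμ : 0 < μ) (hr : 1 < r)
    (hR₁ : R₁ = √(2 / μ * A)) (hR₂ : R₂ = √(2 * r * A)) (hη : η = √μ)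
    (hR : R = R₁ + R₂ / η) :
    2 * R₁ ≤ R := by
  have hR₂η : R₂ / η = √r * R₁ := by
    rw [hR₂, hη, hR₁, ← Real.sqrt_mul (by linarith), ← Real.sqrt_div' _ hμ.le]
    congr 1
    field_simp
  have : 1 ≤ √r := Real.one_le_sqrt.2 hr.le
  have : 0 ≤ R₁ := hR₁ ▸ Real.sqrt_nonneg _
  nlinarith

theorem PAGD_invariant_set_general
    {H : Type*} [NormedAddCommGroup H] [InnerProductSpace ℝ H]
    (L : H →ₗ[ℝ] (H →L[ℝ] ℝ))
    (C₁ : ℝ) (hC₁ : 0 < C₁)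
    (hsymm : ∀ x y : H, L x y = L y x)
    (hcoer : ∀ x : H, C₁ * ‖x‖ ^ 2 ≤ L x x)
    (Linv : (H →L[ℝ] ℝ) → H)
    (hLinv : ∀ f : H →L[ℝ] ℝ, L (Linv f) = f)
    (G : H → ℝ) (G' : H → H →L[ℝ] ℝ)
    (hdiff : ∀ x : H, HasFDerivAt G (G' x) x)
    (μ : ℝ) (hμ : 0 < μ)
    -- μ-strong convexity
    (hsc : ∀ x y : H, (G' x - G' y) (x - y) ≥ μ * L (x - y) (x - y))
    -- minimizer and minimum
    (xstar : H) (hmin : ∀ y : H, G xstar ≤ G y)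
    (x₀ : H) (r : ℝ) (hr : 1 < r)
    -- the invariant set 𝔅
    (R₁ R₂ R : ℝ)
    (hR₁ : R₁ = Real.sqrt (2 / μ * (G x₀ - G xstar)))
    (hR₂ : R₂ = Real.sqrt (2 * r * (G x₀ - G xstar)))
    (η : ℝ) (hη : η = Real.sqrt μ)
    (hR : R = R₁ + R₂ / η)
    (𝔅 : Set H)
    (h𝔅 : 𝔅 = {z : H | Real.sqrt (L (z - xstar) (z - xstar)) ≤ R})
    -- L_B : a Lipschitz smoothness constant of G on 𝔅
    (LB : ℝ)
    (hsm : ∀ z ∈ 𝔅, ∀ w ∈ 𝔅, (G' z - G' w) (z - w) ≤ LB * L (z - w) (z - w))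
    -- step size restriction
    (s : ℝ) (hs : 0 < s)
    (hs' : s ≤ min (1 / LB) (((r - 1) / (r + 1)) ^ 2 / μ))
    -- PAGD parameters and iterates
    (θ lam : ℝ) (hθ : θ = η * Real.sqrt s) (hlam : lam = (1 - θ) / (1 + θ))
    (x y v : ℕ → H)
    (hx0 : x 0 = x₀)
    (hy : ∀ k : ℕ, y k = x k + lam • (x k - x (k - 1)))
    (hx : ∀ k : ℕ, x (k + 1) = y k - s • Linv (G' (y k)))
    (hv0 : v 0 = x 0)
    (hv : ∀ k : ℕ, v (k + 1) = x k + (1 / θ) • (x (k + 1) - x k)) :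
    ∀ k : ℕ,
      Real.sqrt (L (x k - xstar) (x k - xstar)) ≤ R₁ ∧
      x k ∈ 𝔅 ∧ y k ∈ 𝔅 ∧ v k ∈ 𝔅 := by
  have hpos (z : H) : 0 ≤ L z z := le_trans (by positivity) (hcoer z)
  set p := formSeminorm L hsymm hpos
  have h𝔅p : 𝔅 = p.closedBall xstar R := h𝔅
  obtain ⟨hKs, hθ0, hθ1, hθs, hlam'⟩ := PAGD_parameters hμ hs hr hs' hη hθ hlam
  have h2R₁ : 2 * R₁ ≤ R := two_mul_le_PAGD_radius hμ hr hR₁ hR₂ hη hR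
  have hdesc : ∀ u ∈ p.closedBall xstar R, ∀ w ∈ p.closedBall xstar R,
      G u ≤ G w + G' w (u - w) + LB / 2 * L (u - w) (u - w) := fun u hu w hw =>
    (Seminorm.convex_closedBall p xstar R).descent_lemma (fun z _ => hdiff z) L
      (h𝔅p ▸ hsm) hu hw
  intro k
  obtain ⟨hxk, hyk, hvk⟩ := PAGD_mem_closedBall hsymm (formSeminorm_sq hsymm hpos) hdiff hμ
    (le_of_strongMonotone_fderiv hdiff L hsc) hmin hdesc hs hKs hθ0 hθ1 hθs hlam'
    (hx0 ▸ hR₁) h2R₁ hy hx (fun k => hLinv _) hv0 hv k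
  have hR₁R : R₁ ≤ R := by linarith [hR₁ ▸ Real.sqrt_nonneg _]
  rw [h𝔅p]
  exact ⟨hxk, (Seminorm.mem_closedBall _).2 (hxk.trans hR₁R), hyk, hvk⟩

/-- existence of an invariant set for PAGD. With `η = √μ`,
`R₁ = √((2/μ)(G(x₀)−G*))`, `R₂ = √(2r(G(x₀)−G*))`, `R = R₁ + R₂/η`,
`𝔅 = {x : ‖x − x*‖_𝓛 ≤ R}`, and step size
`s ∈ (0, min{1/L_B, ((r−1)/(r+1))²/μ}]`, all the PAGD iterates satisfy
`‖x_k − x*‖_𝓛 ≤ R₁` (so `x_k ∈ 𝔅`), and `y_k, v_k ∈ 𝔅`. -/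
theorem PAGD_invariant_set
    {H : Type*} [NormedAddCommGroup H] [InnerProductSpace ℝ H]
    [CompleteSpace H] [SeparableSpace H]
    (L : H →ₗ[ℝ] (H →L[ℝ] ℝ))
    (C₁ C₂ : ℝ) (hC₁ : 0 < C₁) (hC₂ : 0 < C₂)
    (hsymm : ∀ x y : H, L x y = L y x)
    (hbdd : ∀ x y : H, L x y ≤ C₂ * ‖x‖ * ‖y‖)
    (hcoer : ∀ x : H, C₁ * ‖x‖ ^ 2 ≤ L x x)
    (Linv : (H →L[ℝ] ℝ) → H)
    (hLinv : ∀ f : H →L[ℝ] ℝ, L (Linv f) = f)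
    (hLinv' : ∀ x : H, Linv (L x) = x)
    (G : H → ℝ) (G' : H → H →L[ℝ] ℝ)
    (hdiff : ∀ x : H, HasFDerivAt G (G' x) x)
    (μ : ℝ) (hμ : 0 < μ)
    -- μ-strong convexity
    (hsc : ∀ x y : H, (G' x - G' y) (x - y) ≥ μ * L (x - y) (x - y))
    -- local Lipschitz smoothness
    (hlip : ∀ B : Set H, Convex ℝ B → Bornology.IsBounded B →
      ∃ LB > (0:ℝ), ∀ x ∈ B, ∀ y ∈ B,
        (G' x - G' y) (x - y) ≤ LB * L (x - y) (x - y))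
    -- minimizer and minimum
    (xstar : H) (hmin : ∀ y : H, G xstar ≤ G y)
    (x₀ : H) (r : ℝ) (hr : 1 < r)
    -- the invariant set 𝔅
    (R₁ R₂ R : ℝ)
    (hR₁ : R₁ = Real.sqrt (2 / μ * (G x₀ - G xstar)))
    (hR₂ : R₂ = Real.sqrt (2 * r * (G x₀ - G xstar)))
    (η : ℝ) (hη : η = Real.sqrt μ)
    (hR : R = R₁ + R₂ / η)
    (𝔅 : Set H)
    (h𝔅 : 𝔅 = {z : H | Real.sqrt (L (z - xstar) (z - xstar)) ≤ R})
    -- L_B : a Lipschitz smoothness constant of G on 𝔅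
    (LB : ℝ) (hLB : 0 < LB)
    (hsm : ∀ z ∈ 𝔅, ∀ w ∈ 𝔅, (G' z - G' w) (z - w) ≤ LB * L (z - w) (z - w))
    -- step size restriction
    (s : ℝ) (hs : 0 < s)
    (hs' : s ≤ min (1 / LB) (((r - 1) / (r + 1)) ^ 2 / μ))
    -- PAGD parameters and iterates
    (θ lam : ℝ) (hθ : θ = η * Real.sqrt s) (hlam : lam = (1 - θ) / (1 + θ))
    (x y v : ℕ → H)
    (hx0 : x 0 = x₀)
    (hy : ∀ k : ℕ, y k = x k + lam • (x k - x (k - 1)))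
    (hx : ∀ k : ℕ, x (k + 1) = y k - s • Linv (G' (y k)))
    (hv0 : v 0 = x 0)
    (hv : ∀ k : ℕ, v (k + 1) = x k + (1 / θ) • (x (k + 1) - x k)) :
    ∀ k : ℕ,
      Real.sqrt (L (x k - xstar) (x k - xstar)) ≤ R₁ ∧
      x k ∈ 𝔅 ∧ y k ∈ 𝔅 ∧ v k ∈ 𝔅 :=
  PAGD_invariant_set_general L C₁ hC₁ hsymm hcoer Linv hLinv G G' hdiff μ hμ hsc xstar hmin x₀ r hr
    R₁ R₂ R hR₁ hR₂ η hη hR 𝔅 h𝔅 LB hsm s hs hs' θ lam hθ hlam x y v hx0 hy hx hv0 hv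
end

section
/- Assume G : H → ℝ is μ-strongly convex and locally Lipschitz smooth, and run PAGD with friction η = √μ and step size s ∈ (0, min{1/L_B, ((r−1)/(r+1))²/μ}], where r > 1 and L_B is a Lipschitz smoothness constant of G on the invariant set 𝔅 = {x ∈ H : ‖x − x*‖_𝓛 ≤ R} with R = √((2/μ)(G(x₀) − G*)) + (1/η)√(2r(G(x₀) − G*)). Then for every k ≥ 0: (1/η)·(G(x_{k+1}) − G(x_k))/√s ≤ −(√s/(2η)) ‖G'(y_k)‖_{𝓛⁻¹}² + (1/θ) ⟨G'(y_k), y_k − x_k⟩ − (η/(2√s)) ‖x_k − y_k‖_𝓛². -/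
/-!
Write `‖x‖ = √⟨𝓛x, x⟩`, `g_k = 𝓛⁻¹ G'(y_k)` and `θ = √(μ s)`. Strong convexity
at `y_k` gives `G(y_k) ≤ G(x_k) - ⟨G'(y_k), x_k - y_k⟩ - (μ/2)‖x_k - y_k‖²`, and the descent lemma
`G(y_k - s g_k) ≤ G(y_k) - (s/2)‖g_k‖²` holds as soon as `y_k` and `x_{k+1}` lie in the ball `𝔅`
on which `G` is `L_B`-smooth; adding the two and dividing by `θ` is the claim.

Membership in `𝔅` comes from the energy `E_k = 2s(G(x_k) - G*) + ‖x_k - x_{k-1}‖²`, which the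
same two inequalities show to be nonincreasing, so `E_k ≤ 2s(G(x₀) - G*) = (θ R₁)²`. This puts
`x_k` within `R₁` of `x*` and `y_k` within `(1 + θ) R₁`. If the gradient step left `𝔅`, descent
along it up to the boundary would force `(δ - λ‖x_k - x_{k-1}‖)² < (θ R₁)²` for the distance `δ`
from `y_k` to the boundary, while `δ ≥ √r R₁ - λ‖x_k - x_{k-1}‖`; the step-size bound
`θ ≤ (r - 1)/(r + 1)` and `3(r - 1)/(r + 1) < √r` make this impossible.
-/

open Set

section Form

variable {E : Type*} [AddCommGroup E] [Module ℝ E] [TopologicalSpace E]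

noncomputable def formNorm (L : E →ₗ[ℝ] E →L[ℝ] ℝ) (x : E) : ℝ := √(L x x)

def formClosedBall (L : E →ₗ[ℝ] E →L[ℝ] ℝ) (c : E) (R : ℝ) : Set E :=
  {z | formNorm L (z - c) ≤ R}

variable {L : E →ₗ[ℝ] E →L[ℝ] ℝ}

lemma formNorm_nonneg (x : E) : 0 ≤ formNorm L x :=
  Real.sqrt_nonneg _

lemma mem_formClosedBall {c z : E} {R : ℝ} :
    z ∈ formClosedBall L c R ↔ formNorm L (z - c) ≤ R :=
  Iff.rfl

lemma formNorm_smul (c : ℝ) (x : E) : formNorm L (c • x) = |c| * formNorm L x := by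
  simp only [formNorm, map_smul, smul_apply, smul_eq_mul]
  rw [← mul_assoc, Real.sqrt_mul (mul_self_nonneg c), Real.sqrt_mul_self_eq_abs]

lemma sq_formNorm (hL : ∀ x, 0 ≤ L x x) (x : E) : formNorm L x ^ 2 = L x x :=
  Real.sq_sqrt (hL x)

lemma apply_le_formNorm_mul_formNorm (hsymm : ∀ x y, L x y = L y x) (hL : ∀ x, 0 ≤ L x x)
    (x y : E) : L x y ≤ formNorm L x * formNorm L y := by
  have hcs : L x y * L y x ≤ L x x * L y y :=
    LinearMap.BilinForm.apply_mul_apply_le_of_forall_zero_le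
      ((ContinuousLinearMap.coeLM ℝ).comp L) hL x y
  rw [hsymm y x, ← sq] at hcs
  rw [formNorm, formNorm, ← Real.sqrt_mul (hL x)]
  exact (le_abs_self _).trans (Real.abs_le_sqrt hcs)

lemma formNorm_add_le (hsymm : ∀ x y, L x y = L y x) (hL : ∀ x, 0 ≤ L x x) (x y : E) :
    formNorm L (x + y) ≤ formNorm L x + formNorm L y := by
  rw [formNorm, Real.sqrt_le_left (by unfold formNorm; positivity)]
  have hcs := apply_le_formNorm_mul_formNorm hsymm hL x y
  simp only [map_add, add_apply, add_sq, sq_formNorm hL, hsymm y x]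
  linarith

lemma add_mem_formClosedBall (hsymm : ∀ x y, L x y = L y x) (hL : ∀ x, 0 ≤ L x x)
    {c y v : E} {R : ℝ} (h : formNorm L (y - c) + formNorm L v ≤ R) :
    y + v ∈ formClosedBall L c R :=
  (add_sub_right_comm y v c ▸ formNorm_add_le hsymm hL _ _).trans h

lemma convex_formClosedBall (hsymm : ∀ x y, L x y = L y x) (hL : ∀ x, 0 ≤ L x x)
    (c : E) (R : ℝ) : Convex ℝ (formClosedBall L c R) := by
  intro u hu v hv a b ha hb hab
  have hsplit : a • u + b • v - c = a • (u - c) + b • (v - c) := by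
    calc a • u + b • v - c = a • u + b • v - (a + b) • c := by rw [hab, one_smul]
      _ = a • (u - c) + b • (v - c) := by module
  calc formNorm L (a • u + b • v - c)
      ≤ a * formNorm L (u - c) + b * formNorm L (v - c) := by
        rw [hsplit]
        refine (formNorm_add_le hsymm hL _ _).trans_eq ?_
        rw [formNorm_smul, formNorm_smul, abs_of_nonneg ha, abs_of_nonneg hb]
    _ ≤ a * R + b * R := by gcongr <;> assumption
    _ = R := by rw [← add_mul, hab, one_mul]

end Form

section SegmentBounds

variable {E : Type*} [NormedAddCommGroup E] [NormedSpace ℝ E]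
  {f : E → ℝ} {f' : E → E →L[ℝ] ℝ}

lemma le_add_fderiv_add_of_sub_le (hf : ∀ x, HasFDerivAt f (f' x) x) (a w : E) (c : ℝ)
    (h : ∀ t ∈ Ioo (0 : ℝ) 1, f' (a + t • w) w - f' a w ≤ t * c) :
    f (a + w) ≤ f a + f' a w + c / 2 := by
  set φ : ℝ → ℝ := fun t ↦ f (a + t • w) - t * f' a w - t ^ 2 * (c / 2)
  have hφ : ∀ t, HasDerivAt φ (f' (a + t • w) w - f' a w - t * c) t := by
    intro t
    have hline : HasDerivAt (fun τ : ℝ ↦ a + τ • w) w t := by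
      simpa using ((hasDerivAt_id t).smul_const w).const_add a
    refine ((((hf _).comp_hasDerivAt t hline).sub ((hasDerivAt_id t).mul_const (f' a w))).sub
      ((hasDerivAt_pow 2 t).mul_const (c / 2))).congr_deriv ?_
    simp only [one_mul, Nat.cast_ofNat]
    ring
  have hanti : AntitoneOn φ (Icc 0 1) :=
    antitoneOn_of_hasDerivWithinAt_nonpos (convex_Icc 0 1)
      (fun t _ ↦ (hφ t).continuousAt.continuousWithinAt) (fun t _ ↦ (hφ t).hasDerivWithinAt)
      (fun t ht ↦ by rw [interior_Icc] at ht; linarith [h t ht])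
  have h01 := hanti (left_mem_Icc.2 zero_le_one) (right_mem_Icc.2 zero_le_one) zero_le_one
  simp only [φ, one_smul, zero_smul, add_zero] at h01
  linarith

variable {L : E →ₗ[ℝ] E →L[ℝ] ℝ}

lemma le_add_fderiv_add_of_forall_segment_le (hf : ∀ x, HasFDerivAt f (f' x) x) (K : ℝ) (a b : E)
    (h : ∀ t ∈ Ioo (0 : ℝ) 1,
      (f' (a + t • (b - a)) - f' a) (t • (b - a)) ≤ K * L (t • (b - a)) (t • (b - a))) :
    f b ≤ f a + f' a (b - a) + K / 2 * L (b - a) (b - a) := by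
  have key := le_add_fderiv_add_of_sub_le hf a (b - a) (K * L (b - a) (b - a)) fun t ht ↦ by
    have := h t ht
    simp only [map_smul, sub_apply, smul_apply, smul_eq_mul] at this
    nlinarith [ht.1]
  rwa [add_sub_cancel, mul_div_right_comm] at key

lemma add_fderiv_add_le_of_strongMonotone (hf : ∀ x, HasFDerivAt f (f' x) x) (μ : ℝ)
    (hsc : ∀ x y, (f' x - f' y) (x - y) ≥ μ * L (x - y) (x - y)) (a b : E) :
    f a + f' a (b - a) + μ / 2 * L (b - a) (b - a) ≤ f b := by
  have key := le_add_fderiv_add_of_forall_segment_le (f := -f) (f' := -f') (fun x ↦ (hf x).neg)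
    (-μ) a b fun t _ ↦ by
      have := hsc (a + t • (b - a)) a
      rw [add_sub_cancel_left] at this
      simp only [Pi.neg_apply, sub_apply, neg_apply] at this ⊢
      linarith
  simp only [Pi.neg_apply, neg_apply] at key
  linarith

lemma le_add_fderiv_add_of_smoothOn (hf : ∀ x, HasFDerivAt f (f' x) x) {B : Set E}
    (hB : Convex ℝ B) (K : ℝ)
    (hsm : ∀ x ∈ B, ∀ y ∈ B, (f' x - f' y) (x - y) ≤ K * L (x - y) (x - y))
    {a b : E} (ha : a ∈ B) (hb : b ∈ B) :
    f b ≤ f a + f' a (b - a) + K / 2 * L (b - a) (b - a) :=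
  le_add_fderiv_add_of_forall_segment_le hf K a b fun t ht ↦ by
    simpa only [add_sub_cancel_left] using
      hsm _ (hB.add_smul_sub_mem ha hb ⟨ht.1.le, ht.2.le⟩) a ha

lemma quadratic_growth_of_strongMonotone (hf : ∀ x, HasFDerivAt f (f' x) x) (μ : ℝ)
    (hsc : ∀ x y, (f' x - f' y) (x - y) ≥ μ * L (x - y) (x - y)) {c : E} (hmin : ∀ z, f c ≤ f z)
    (x : E) : μ / 2 * L (x - c) (x - c) ≤ f x - f c := by
  have key := add_fderiv_add_le_of_strongMonotone hf μ hsc c x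
  rw [IsLocalMin.hasFDerivAt_eq_zero (Filter.Eventually.of_forall hmin) (hf c), zero_apply]
    at key
  linarith

lemma gradient_step_le_of_smoothOn (hf : ∀ x, HasFDerivAt f (f' x) x) (hL : ∀ x, 0 ≤ L x x)
    {B : Set E} (hB : Convex ℝ B) (K : ℝ)
    (hsm : ∀ x ∈ B, ∀ y ∈ B, (f' x - f' y) (x - y) ≤ K * L (x - y) (x - y))
    {y g : E} (hg : L g = f' y) {t : ℝ} (ht : 0 ≤ t) (htK : t * K ≤ 1)
    (hy : y ∈ B) (hyt : y - t • g ∈ B) :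
    f (y - t • g) ≤ f y - t / 2 * L g g := by
  have key := le_add_fderiv_add_of_smoothOn hf hB K hsm hy hyt
  simp only [sub_sub_cancel_left, ← hg, map_neg, map_smul, neg_apply, smul_apply,
    smul_eq_mul] at key
  nlinarith [mul_nonneg ht (hL g)]

end SegmentBounds

lemma three_mul_div_lt_sqrt {r : ℝ} (hr : 1 < r) : 3 * ((r - 1) / (r + 1)) < √r := by
  have hu : 1 < √r := Real.lt_sqrt_of_sq_lt (by linarith)
  have hr' : r = √r ^ 2 := (Real.sq_sqrt (by linarith)).symm
  generalize √r = u at hu hr'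
  subst hr'
  rw [mul_div_assoc', div_lt_iff₀ (by positivity)]
  rcases le_or_gt u 2 with hu2 | hu2
  · nlinarith [mul_pos (sub_pos.2 hu) (sub_pos.2 hu)]
  · nlinarith [sq_nonneg (u - 2)]

/-- The arithmetic of the boundary argument, with `n = ‖g‖`, `p = ‖x - xp‖`, `a = f x - f x*` and
`δ` the distance from `y` to the boundary of the ball. -/
lemma mul_le_of_gap_bound {s a p lam θ R₁ q δ n : ℝ} (hs : 0 < s) (ha : 0 ≤ a) (hp : 0 ≤ p)
    (hlam0 : 0 ≤ lam) (hlam1 : lam ≤ 1) (hθ : 0 ≤ θ) (hR₁ : 0 < R₁) (hθq : 3 * θ < q)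
    (henergy : 2 * s * a + p ^ 2 ≤ (θ * R₁) ^ 2) (hδ : q * R₁ - lam * p ≤ δ)
    (hgap : ∀ t, 0 ≤ t → t ≤ s → t * n ≤ δ → t * n ^ 2 ≤ 2 * (a + lam * p * n)) :
    s * n ≤ δ := by
  by_contra! hsn
  have hpθ : p ≤ θ * R₁ := abs_le_of_sq_le_sq' (by nlinarith) (by positivity) |>.2
  have hlp : lam * p ≤ θ * R₁ := by nlinarith
  have hδ2 : 0 < δ - 2 * (lam * p) := by nlinarith
  have hn : 0 < n := by nlinarith
  have hδn : δ * n ≤ 2 * (a + lam * p * n) := by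
    have := hgap (δ / n) (div_nonneg (by nlinarith) hn.le) (by rw [div_le_iff₀ hn]; linarith)
      (by rw [div_mul_cancel₀ _ hn.ne'])
    calc δ * n = δ / n * n ^ 2 := by field_simp
      _ ≤ _ := this
  have hlt : (δ - lam * p) ^ 2 < (θ * R₁) ^ 2 := by
    nlinarith [mul_lt_mul_of_pos_left hsn hδ2, mul_le_mul_of_nonneg_left hδn hs.le,
      mul_le_mul_of_nonneg_right (mul_le_one₀ hlam1 hlam0 hlam1) (sq_nonneg p)]
  have hgt : θ * R₁ < δ - lam * p := by nlinarith
  nlinarith [mul_self_lt_mul_self (by positivity) hgt]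

section PAGD

variable {E : Type*} [NormedAddCommGroup E] [NormedSpace ℝ E]
  {L : E →ₗ[ℝ] E →L[ℝ] ℝ} {f : E → ℝ} {f' : E → E →L[ℝ] ℝ}

lemma le_add_formNorm_mul_of_strongMonotone (hf : ∀ x, HasFDerivAt f (f' x) x)
    (hsymm : ∀ x y, L x y = L y x) (hL : ∀ x, 0 ≤ L x x) {μ : ℝ} (hμ : 0 ≤ μ)
    (hsc : ∀ x y, (f' x - f' y) (x - y) ≥ μ * L (x - y) (x - y)) {x y g : E} (hg : L g = f' y) :
    f y ≤ f x + formNorm L g * formNorm L (y - x) := by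
  have hlow := add_fderiv_add_le_of_strongMonotone hf μ hsc y x
  rw [← hg, ← neg_sub, map_neg] at hlow
  linarith [apply_le_formNorm_mul_formNorm hsymm hL g (y - x),
    mul_nonneg (div_nonneg hμ zero_le_two) (hL (-(y - x)))]

lemma formNorm_sub_le_of_energy_le (hf : ∀ x, HasFDerivAt f (f' x) x) (hL : ∀ x, 0 ≤ L x x)
    {μ : ℝ} (hμ : 0 < μ) (hsc : ∀ x y, (f' x - f' y) (x - y) ≥ μ * L (x - y) (x - y))
    {xstar : E} (hmin : ∀ z, f xstar ≤ f z) {s θ R₁ : ℝ} (hs : 0 < s) (hθsq : θ ^ 2 = μ * s)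
    (hR₁ : 0 ≤ R₁) {x : E} (henergy : 2 * s * (f x - f xstar) ≤ (θ * R₁) ^ 2) :
    formNorm L (x - xstar) ≤ R₁ := by
  have hgrowth := quadratic_growth_of_strongMonotone hf μ hsc hmin x
  rw [← sq_formNorm hL] at hgrowth
  have hμs : 0 < μ * s := mul_pos hμ hs
  have : μ * s * formNorm L (x - xstar) ^ 2 ≤ μ * s * R₁ ^ 2 := by nlinarith
  exact abs_le_of_sq_le_sq' (le_of_mul_le_mul_left this hμs) hR₁ |>.2

lemma mul_apply_self_le_of_mem_formClosedBall (hf : ∀ x, HasFDerivAt f (f' x) x)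
    (hsymm : ∀ x y, L x y = L y x) (hL : ∀ x, 0 ≤ L x x) {xstar : E} (hmin : ∀ z, f xstar ≤ f z)
    {R K : ℝ} (hsm : ∀ x ∈ formClosedBall L xstar R, ∀ y ∈ formClosedBall L xstar R,
      (f' x - f' y) (x - y) ≤ K * L (x - y) (x - y))
    {y g : E} (hg : L g = f' y) {t : ℝ} (ht : 0 ≤ t) (htK : t * K ≤ 1)
    (hgap : formNorm L (y - xstar) + t * formNorm L g ≤ R) :
    t * L g g ≤ 2 * (f y - f xstar) := by
  have hgt : formNorm L (-t • g) = t * formNorm L g := by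
    rw [formNorm_smul, abs_neg, abs_of_nonneg ht]
  have hy : y ∈ formClosedBall L xstar R :=
    mem_formClosedBall.2 (by linarith [mul_nonneg ht (formNorm_nonneg (L := L) g)])
  have hyt : y - t • g ∈ formClosedBall L xstar R := by
    rw [sub_eq_add_neg, ← neg_smul]
    exact add_mem_formClosedBall hsymm hL (hgt ▸ hgap)
  have := gradient_step_le_of_smoothOn hf hL (convex_formClosedBall hsymm hL xstar R) K hsm hg ht
    htK hy hyt
  linarith [hmin (y - t • g)]

lemma pagd_mem_formClosedBall (hf : ∀ x, HasFDerivAt f (f' x) x)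
    (hsymm : ∀ x y, L x y = L y x) (hL : ∀ x, 0 ≤ L x x) {μ : ℝ} (hμ : 0 < μ)
    (hsc : ∀ x y, (f' x - f' y) (x - y) ≥ μ * L (x - y) (x - y))
    {xstar : E} (hmin : ∀ z, f xstar ≤ f z)
    {R K : ℝ} (hsm : ∀ x ∈ formClosedBall L xstar R, ∀ y ∈ formClosedBall L xstar R,
      (f' x - f' y) (x - y) ≤ K * L (x - y) (x - y))
    {s θ q R₁ lam : ℝ} (hs : 0 < s) (hsK : s * K ≤ 1) (hθ : 0 ≤ θ) (hθsq : θ ^ 2 = μ * s)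
    (hθq : 3 * θ < q) (hR₁ : 0 ≤ R₁) (hR : (1 + q) * R₁ ≤ R) (hlam0 : 0 ≤ lam) (hlam1 : lam ≤ 1)
    {x xp y g : E} (hy : y = x + lam • (x - xp)) (hg : L g = f' y)
    (henergy : 2 * s * (f x - f xstar) + L (x - xp) (x - xp) ≤ (θ * R₁) ^ 2) :
    y ∈ formClosedBall L xstar R ∧ y - s • g ∈ formClosedBall L xstar R := by
  have ha : 0 ≤ f x - f xstar := sub_nonneg.2 (hmin x)
  rw [← sq_formNorm hL] at henergy
  have hp : formNorm L (x - xp) ≤ θ * R₁ :=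
    abs_le_of_sq_le_sq' (by nlinarith) (by positivity) |>.2
  have hx := formNorm_sub_le_of_energy_le hf hL hμ hsc hmin hs hθsq hR₁ (x := x) (by nlinarith)
  have hyx : y - x = lam • (x - xp) := by rw [hy, add_sub_cancel_left]
  have hyx' : formNorm L (y - x) = lam * formNorm L (x - xp) := by
    rw [hyx, formNorm_smul, abs_of_nonneg hlam0]
  have hyc : formNorm L (y - xstar) ≤ R₁ + lam * formNorm L (x - xp) := by
    have := formNorm_add_le hsymm hL (x - xstar) (y - x)
    rw [sub_add_sub_cancel', hyx'] at this
    linarith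
  have hlp : lam * formNorm L (x - xp) ≤ θ * R₁ := by nlinarith [formNorm_nonneg (L := L) (x - xp)]
  have hyB : y ∈ formClosedBall L xstar R := mem_formClosedBall.2 (by nlinarith)
  refine ⟨hyB, ?_⟩
  suffices hstep : s * formNorm L g ≤ R - formNorm L (y - xstar) by
    rw [sub_eq_add_neg, ← neg_smul]
    refine add_mem_formClosedBall hsymm hL ?_
    rw [formNorm_smul, abs_neg, abs_of_pos hs]
    linarith
  have hfy := le_add_formNorm_mul_of_strongMonotone hf hsymm hL hμ.le hsc (x := x) hg
  rw [hyx'] at hfy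
  rcases hR₁.eq_or_lt with rfl | hR₁pos
  -- With `R₁ = 0` there is no room for the boundary argument, but then `y` minimizes `f`.
  · have hp0 : formNorm L (x - xp) = 0 := le_antisymm (by simpa using hp) (formNorm_nonneg _)
    rw [hp0] at hfy henergy
    have hymin : ∀ z, f y ≤ f z := fun z ↦ by nlinarith [hmin z]
    have hg0 : formNorm L g = 0 := by
      rw [formNorm, hg, IsLocalMin.hasFDerivAt_eq_zero (Filter.Eventually.of_forall hymin) (hf y)]
      simp
    rw [hg0, mul_zero, sub_nonneg]
    exact hyB
  · refine mul_le_of_gap_bound hs ha (formNorm_nonneg _) hlam0 hlam1 hθ hR₁pos hθq henergy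
      (by linarith) fun t ht hts htg ↦ ?_
    have htK : t * K ≤ 1 := by rcases le_total 0 K with hK | hK <;> nlinarith
    have := mul_apply_self_le_of_mem_formClosedBall hf hsymm hL hmin hsm hg ht htK (by linarith)
    rw [← sq_formNorm hL] at this
    linarith

lemma pagd_descent (hf : ∀ x, HasFDerivAt f (f' x) x) (hL : ∀ x, 0 ≤ L x x) (μ : ℝ)
    (hsc : ∀ x y, (f' x - f' y) (x - y) ≥ μ * L (x - y) (x - y)) {B : Set E} (hB : Convex ℝ B)
    (K : ℝ) (hsm : ∀ x ∈ B, ∀ y ∈ B, (f' x - f' y) (x - y) ≤ K * L (x - y) (x - y))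
    {x y g : E} (hg : L g = f' y) {s : ℝ} (hs : 0 ≤ s) (hsK : s * K ≤ 1)
    (hy : y ∈ B) (hys : y - s • g ∈ B) :
    f (y - s • g) - f x ≤ -(s / 2) * f' y g + f' y (y - x) - μ / 2 * L (x - y) (x - y) := by
  have hstep := gradient_step_le_of_smoothOn hf hL hB K hsm hg hs hsK hy hys
  have hlow := add_fderiv_add_le_of_strongMonotone hf μ hsc y x
  rw [hg] at hstep
  have hflip : f' y (x - y) = -f' y (y - x) := by rw [← map_neg, neg_sub]
  linarith

lemma pagd_energy_le (hsymm : ∀ x y, L x y = L y x) (hL : ∀ x, 0 ≤ L x x) {μ s lam : ℝ}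
    (hμ : 0 ≤ μ) (hs : 0 < s) (hlam : lam ^ 2 ≤ 1) {x xp y g : E} (hy : y = x + lam • (x - xp))
    (hg : L g = f' y)
    (hdesc : f (y - s • g) - f x ≤
      -(s / 2) * f' y g + f' y (y - x) - μ / 2 * L (x - y) (x - y)) :
    2 * s * f (y - s • g) + L (y - s • g - x) (y - s • g - x)
      ≤ 2 * s * f x + L (x - xp) (x - xp) := by
  have hyx : y - x = lam • (x - xp) := by rw [hy, add_sub_cancel_left]
  have hstep : L (y - s • g - x) (y - s • g - x)
      = lam ^ 2 * L (x - xp) (x - xp) - 2 * s * L g (y - x) + s ^ 2 * L g g := by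
    rw [sub_right_comm, hyx]
    generalize x - xp = a
    simp only [map_sub, map_smul, sub_apply, smul_apply, smul_eq_mul, hsymm a g]
    ring
  have hmom : L (x - y) (x - y) = lam ^ 2 * L (x - xp) (x - xp) := by
    rw [← neg_sub, hyx]
    simp only [map_neg, map_smul, neg_apply, smul_apply, smul_eq_mul]
    ring
  rw [← hg, hmom] at hdesc
  rw [hstep]
  nlinarith [mul_nonneg (mul_nonneg hμ hs.le) (mul_nonneg (sq_nonneg lam) (hL (x - xp))),
    mul_le_mul_of_nonneg_right hlam (hL (x - xp))]

lemma pagd_step (hf : ∀ x, HasFDerivAt f (f' x) x)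
    (hsymm : ∀ x y, L x y = L y x) (hL : ∀ x, 0 ≤ L x x) {μ : ℝ} (hμ : 0 < μ)
    (hsc : ∀ x y, (f' x - f' y) (x - y) ≥ μ * L (x - y) (x - y))
    {xstar : E} (hmin : ∀ z, f xstar ≤ f z)
    {R K : ℝ} (hsm : ∀ x ∈ formClosedBall L xstar R, ∀ y ∈ formClosedBall L xstar R,
      (f' x - f' y) (x - y) ≤ K * L (x - y) (x - y))
    {s θ q R₁ lam : ℝ} (hs : 0 < s) (hsK : s * K ≤ 1) (hθ : 0 ≤ θ) (hθsq : θ ^ 2 = μ * s)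
    (hθq : 3 * θ < q) (hR₁ : 0 ≤ R₁) (hR : (1 + q) * R₁ ≤ R) (hlam0 : 0 ≤ lam) (hlam1 : lam ≤ 1)
    {x xp y g x' : E} (hy : y = x + lam • (x - xp)) (hg : L g = f' y) (hx' : x' = y - s • g)
    (henergy : 2 * s * (f x - f xstar) + L (x - xp) (x - xp) ≤ (θ * R₁) ^ 2) :
    f x' - f x ≤ -(s / 2) * f' y g + f' y (y - x) - μ / 2 * L (x - y) (x - y) ∧
      2 * s * (f x' - f xstar) + L (x' - x) (x' - x) ≤ (θ * R₁) ^ 2 := by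
  obtain ⟨hyB, hyB'⟩ := pagd_mem_formClosedBall hf hsymm hL hμ hsc hmin hsm hs hsK hθ hθsq hθq
    hR₁ hR hlam0 hlam1 hy hg henergy
  subst hx'
  have hdesc := pagd_descent hf hL μ hsc (convex_formClosedBall hsymm hL xstar R) K hsm (x := x)
    hg hs.le hsK hyB hyB'
  have := pagd_energy_le hsymm hL hμ.le hs (by nlinarith) hy hg hdesc
  exact ⟨hdesc, by linarith⟩

end PAGD

lemma pagd_parameters {μ s r η θ lam : ℝ} (hμ : 0 < μ) (hs : 0 < s) (hr : 1 < r)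
    (hη : η = √μ) (hθ : θ = η * √s) (hlam : lam = (1 - θ) / (1 + θ))
    (hsr : s ≤ ((r - 1) / (r + 1)) ^ 2 / μ) :
    0 < θ ∧ θ ^ 2 = μ * s ∧ 3 * θ < √r ∧ 0 ≤ lam ∧ lam ≤ 1 := by
  have hθ0 : 0 < θ := hθ ▸ mul_pos (hη ▸ Real.sqrt_pos.2 hμ) (Real.sqrt_pos.2 hs)
  have hθsq : θ ^ 2 = μ * s := by rw [hθ, hη, mul_pow, Real.sq_sqrt hμ.le, Real.sq_sqrt hs.le]
  have hq : 0 < (r - 1) / (r + 1) := div_pos (by linarith) (by linarith)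
  have hθq : θ ≤ (r - 1) / (r + 1) := by
    refine (pow_le_pow_iff_left₀ hθ0.le hq.le two_ne_zero).1 ?_
    rwa [hθsq, mul_comm, ← le_div_iff₀ hμ]
  have hθ1 : θ < 1 := hθq.trans_lt ((div_lt_one (by linarith)).2 (by linarith))
  refine ⟨hθ0, hθsq, by linarith [three_mul_div_lt_sqrt hr], ?_, ?_⟩ <;> rw [hlam]
  · exact div_nonneg (by linarith) (by linarith)
  · exact (div_le_one (by linarith)).2 (by linarith)

lemma pagd_radius {μ r s θ D η R₁ R₂ R : ℝ} (hμ : 0 < μ) (hr : 0 ≤ r) (hD : 0 ≤ D)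
    (hθsq : θ ^ 2 = μ * s) (hR₁ : R₁ = √(2 / μ * D)) (hR₂ : R₂ = √(2 * r * D)) (hη : η = √μ)
    (hR : R = R₁ + R₂ / η) :
    0 ≤ R₁ ∧ (1 + √r) * R₁ ≤ R ∧ 2 * s * D = (θ * R₁) ^ 2 := by
  have hR₂η : R₂ / η = √r * R₁ := by
    rw [hR₂, hη, hR₁, ← Real.sqrt_mul hr, ← Real.sqrt_div' _ hμ.le]
    congr 1
    field_simp
  refine ⟨hR₁ ▸ Real.sqrt_nonneg _, (by rw [hR, hR₂η]; ring : R = (1 + √r) * R₁).ge, ?_⟩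
  rw [mul_pow, hθsq, hR₁, Real.sq_sqrt (by positivity)]
  field_simp

lemma div_mul_sqrt_le_of_le {A N P Q η s μ : ℝ} (hη : 0 < η) (hs : 0 < s) (hμ : η ^ 2 = μ)
    (h : A ≤ -(s / 2) * N + P - μ / 2 * Q) :
    1 / η * (A / √s) ≤ -(√s / (2 * η)) * N + 1 / (η * √s) * P - η / (2 * √s) * Q := by
  obtain ⟨u, hu, rfl⟩ : ∃ u, 0 < u ∧ s = u ^ 2 :=
    ⟨√s, Real.sqrt_pos.2 hs, (Real.sq_sqrt hs.le).symm⟩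
  rw [Real.sqrt_sq hu.le]
  have key : -(u / (2 * η)) * N + 1 / (η * u) * P - η / (2 * u) * Q - 1 / η * (A / u)
      = (-(u ^ 2 / 2) * N + P - μ / 2 * Q - A) / (η * u) := by
    rw [← hμ]
    field_simp
  have := div_nonneg (sub_nonneg.2 h) (mul_pos hη hu).le
  linarith

open TopologicalSpace

theorem PAGD_discrete_derivative_potential_energy_general
    {H : Type*} [NormedAddCommGroup H] [InnerProductSpace ℝ H]
    (L : H →ₗ[ℝ] (H →L[ℝ] ℝ))
    (C₁ : ℝ) (hC₁ : 0 < C₁)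
    (hsymm : ∀ x y : H, L x y = L y x)
    (hcoer : ∀ x : H, C₁ * ‖x‖ ^ 2 ≤ L x x)
    (Linv : (H →L[ℝ] ℝ) → H)
    (hLinv : ∀ f : H →L[ℝ] ℝ, L (Linv f) = f)
    (G : H → ℝ) (G' : H → H →L[ℝ] ℝ)
    (hdiff : ∀ x : H, HasFDerivAt G (G' x) x)
    (μ : ℝ) (hμ : 0 < μ)
    -- μ-strong convexity
    (hsc : ∀ x y : H, (G' x - G' y) (x - y) ≥ μ * L (x - y) (x - y))
    -- minimizer and minimum
    (xstar : H) (hmin : ∀ y : H, G xstar ≤ G y)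
    (x₀ : H) (r : ℝ) (hr : 1 < r)
    -- the invariant set 𝔅
    (R₁ R₂ R : ℝ)
    (hR₁ : R₁ = Real.sqrt (2 / μ * (G x₀ - G xstar)))
    (hR₂ : R₂ = Real.sqrt (2 * r * (G x₀ - G xstar)))
    (η : ℝ) (hη : η = Real.sqrt μ)
    (hR : R = R₁ + R₂ / η)
    (𝔅 : Set H)
    (h𝔅 : 𝔅 = {z : H | Real.sqrt (L (z - xstar) (z - xstar)) ≤ R})
    -- L_B : a Lipschitz smoothness constant of G on 𝔅
    (LB : ℝ) (hLB : 0 < LB)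
    (hsm : ∀ z ∈ 𝔅, ∀ w ∈ 𝔅, (G' z - G' w) (z - w) ≤ LB * L (z - w) (z - w))
    -- step size restriction
    (s : ℝ) (hs : 0 < s)
    (hs' : s ≤ min (1 / LB) (((r - 1) / (r + 1)) ^ 2 / μ))
    -- PAGD parameters and iterates
    (θ lam : ℝ) (hθ : θ = η * Real.sqrt s) (hlam : lam = (1 - θ) / (1 + θ))
    (x y : ℕ → H)
    (hx0 : x 0 = x₀)
    (hy : ∀ k : ℕ, y k = x k + lam • (x k - x (k - 1)))
    (hx : ∀ k : ℕ, x (k + 1) = y k - s • Linv (G' (y k))) :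
    ∀ k : ℕ,
      1 / η * ((G (x (k + 1)) - G (x k)) / Real.sqrt s)
        ≤ -(Real.sqrt s / (2 * η)) * (G' (y k)) (Linv (G' (y k)))
            + (1 / θ) * (G' (y k)) (y k - x k)
            - η / (2 * Real.sqrt s) * L (x k - y k) (x k - y k) := by
  have hL : ∀ z, 0 ≤ L z z := fun z ↦ (by positivity : 0 ≤ C₁ * ‖z‖ ^ 2).trans (hcoer z)
  obtain ⟨hθ0, hθsq, hθr, hlam0, hlam1⟩ :=
    pagd_parameters hμ hs hr hη hθ hlam (hs'.trans (min_le_right _ _))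
  have hsLB : s * LB ≤ 1 := (le_div_iff₀ hLB).1 (hs'.trans (min_le_left _ _))
  obtain ⟨hR₁0, hRR, henergy0⟩ :=
    pagd_radius hμ (by linarith) (sub_nonneg.2 (hmin x₀)) hθsq hR₁ hR₂ hη hR
  subst h𝔅
  have hstep := fun k ↦ pagd_step hdiff hsymm hL hμ hsc hmin hsm hs hsLB hθ0.le hθsq hθr hR₁0 hRR
    hlam0 hlam1 (hy k) (hLinv _) (hx k)
  -- `x (0 - 1) = x 0` encodes the convention `x₋₁ = x₀`.
  have henergy : ∀ k, 2 * s * (G (x k) - G xstar) + L (x k - x (k - 1)) (x k - x (k - 1))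
      ≤ (θ * R₁) ^ 2 := by
    intro k
    induction k with
    | zero => simpa [hx0] using henergy0.le
    | succ k ih => simpa using (hstep k ih).2
  intro k
  rw [hθ]
  exact div_mul_sqrt_le_of_le (hη ▸ Real.sqrt_pos.2 hμ) hs (hη ▸ Real.sq_sqrt hμ.le)
    (hstep k (henergy k)).1

/-- discrete derivative of the potential energy along PAGD.
Under the invariant-set step size restriction, for every `k ≥ 0`:
`(1/η)(G(x_{k+1}) − G(x_k))/√s ≤ −(√s/(2η))‖G'(y_k)‖_{𝓛⁻¹}²
 + (1/θ)⟨G'(y_k), y_k − x_k⟩ − (η/(2√s))‖x_k − y_k‖_𝓛²`. -/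
theorem PAGD_discrete_derivative_potential_energy
    {H : Type*} [NormedAddCommGroup H] [InnerProductSpace ℝ H]
    [CompleteSpace H] [SeparableSpace H]
    (L : H →ₗ[ℝ] (H →L[ℝ] ℝ))
    (C₁ C₂ : ℝ) (hC₁ : 0 < C₁) (hC₂ : 0 < C₂)
    (hsymm : ∀ x y : H, L x y = L y x)
    (hbdd : ∀ x y : H, L x y ≤ C₂ * ‖x‖ * ‖y‖)
    (hcoer : ∀ x : H, C₁ * ‖x‖ ^ 2 ≤ L x x)
    (Linv : (H →L[ℝ] ℝ) → H)
    (hLinv : ∀ f : H →L[ℝ] ℝ, L (Linv f) = f)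
    (hLinv' : ∀ x : H, Linv (L x) = x)
    (G : H → ℝ) (G' : H → H →L[ℝ] ℝ)
    (hdiff : ∀ x : H, HasFDerivAt G (G' x) x)
    (μ : ℝ) (hμ : 0 < μ)
    -- μ-strong convexity
    (hsc : ∀ x y : H, (G' x - G' y) (x - y) ≥ μ * L (x - y) (x - y))
    -- local Lipschitz smoothness
    (hlip : ∀ B : Set H, Convex ℝ B → Bornology.IsBounded B →
      ∃ LB > (0:ℝ), ∀ x ∈ B, ∀ y ∈ B,
        (G' x - G' y) (x - y) ≤ LB * L (x - y) (x - y))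
    -- minimizer and minimum
    (xstar : H) (hmin : ∀ y : H, G xstar ≤ G y)
    (x₀ : H) (r : ℝ) (hr : 1 < r)
    -- the invariant set 𝔅
    (R₁ R₂ R : ℝ)
    (hR₁ : R₁ = Real.sqrt (2 / μ * (G x₀ - G xstar)))
    (hR₂ : R₂ = Real.sqrt (2 * r * (G x₀ - G xstar)))
    (η : ℝ) (hη : η = Real.sqrt μ)
    (hR : R = R₁ + R₂ / η)
    (𝔅 : Set H)
    (h𝔅 : 𝔅 = {z : H | Real.sqrt (L (z - xstar) (z - xstar)) ≤ R})
    -- L_B : a Lipschitz smoothness constant of G on 𝔅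
    (LB : ℝ) (hLB : 0 < LB)
    (hsm : ∀ z ∈ 𝔅, ∀ w ∈ 𝔅, (G' z - G' w) (z - w) ≤ LB * L (z - w) (z - w))
    -- step size restriction
    (s : ℝ) (hs : 0 < s)
    (hs' : s ≤ min (1 / LB) (((r - 1) / (r + 1)) ^ 2 / μ))
    -- PAGD parameters and iterates
    (θ lam : ℝ) (hθ : θ = η * Real.sqrt s) (hlam : lam = (1 - θ) / (1 + θ))
    (x y v : ℕ → H)
    (hx0 : x 0 = x₀)
    (hy : ∀ k : ℕ, y k = x k + lam • (x k - x (k - 1)))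
    (hx : ∀ k : ℕ, x (k + 1) = y k - s • Linv (G' (y k)))
    (hv0 : v 0 = x 0)
    (hv : ∀ k : ℕ, v (k + 1) = x k + (1 / θ) • (x (k + 1) - x k)) :
    ∀ k : ℕ,
      1 / η * ((G (x (k + 1)) - G (x k)) / Real.sqrt s)
        ≤ -(Real.sqrt s / (2 * η)) * (G' (y k)) (Linv (G' (y k)))
            + (1 / θ) * (G' (y k)) (y k - x k)
            - η / (2 * Real.sqrt s) * L (x k - y k) (x k - y k) :=
  PAGD_discrete_derivative_potential_energy_general L C₁ hC₁ hsymm hcoer Linv hLinv G G' hdiff μ hμ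
    hsc xstar hmin x₀ r hr R₁ R₂ R hR₁ hR₂ η hη hR 𝔅 h𝔅 LB hLB hsm s hs hs' θ lam hθ hlam x y hx0 hy
    hx
end

section
/- The PAGD iterates satisfy, for every k ≥ 0 and with x* the minimizer of G, the identity: (η/(2√s))(‖v_{k+1} − x*‖_𝓛² − ‖v_k − x*‖_𝓛²) + (1/θ)⟨G'(y_k), y_k − x_k⟩ + (η²/2)‖v_k − x*‖_𝓛² − (η/(2√s))‖v_{k+1} − v_k‖_𝓛² + (1/(2s))‖y_k − x_k‖_𝓛² − (η²/2)‖y_k − x*‖_𝓛² + ⟨G'(y_k), y_k − x*⟩ = 0. -/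
/-!
The momentum variable is an extrapolation of the current step,
`v_k = y_k + θ⁻¹ (y_k - x_k)`: for `k = 0` because `x₋₁ = x₀` (encoded by the truncated
subtraction `0 - 1 = 0`), afterwards because `λ = (1 - θ)/(1 + θ)`. Consequently
`v_{k+1} - v_k = -(y_k - x_k) - (s/θ) 𝓛⁻¹G'(y_k)`. By polarization the first and fourth terms
of the identity combine to `(η/√s) (v_k - x*, v_{k+1} - v_k)_𝓛`; expanding everything in
`w = y_k - x*`, `a = y_k - x_k`, `g = 𝓛⁻¹G'(y_k)`, all terms cancel because `θ = η√s` gives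
`(η/√s)(s/θ) = 1` and `η²/θ² = η/(θ√s) = 1/s`.
-/

open TopologicalSpace

namespace PAGD

section Iterates

variable {𝕜 E : Type*} [Field 𝕜] [AddCommGroup E] [Module 𝕜 E]

theorem v_eq_y_add_smul {θ lam : 𝕜} (hθ : θ ≠ 0) (h1θ : 1 + θ ≠ 0)
    (hlam : lam = (1 - θ) / (1 + θ)) {x y v : ℕ → E}
    (hy : ∀ k, y k = x k + lam • (x k - x (k - 1))) (hv0 : v 0 = x 0)
    (hv : ∀ k, v (k + 1) = x k + (1 / θ) • (x (k + 1) - x k)) (k : ℕ) :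
    v k = y k + (1 / θ) • (y k - x k) := by
  cases k with
  | zero => simp [hv0, hy 0]
  | succ n =>
    rw [hv n, hy (n + 1), Nat.add_sub_cancel, hlam]
    match_scalars <;> field_simp <;> ring

theorem v_succ_sub_v_eq {θ s : 𝕜} (hθ : θ ≠ 0) {xk xk₁ yk vk vk₁ g : E}
    (hvk : vk = yk + (1 / θ) • (yk - xk)) (hvk₁ : vk₁ = xk + (1 / θ) • (xk₁ - xk))
    (hxk₁ : xk₁ = yk - s • g) :
    vk₁ - vk = -(yk - xk) - (s / θ) • g := by
  rw [hvk, hvk₁, hxk₁]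
  match_scalars <;> field_simp <;> ring

end Iterates

theorem energy_identity_of_decomposition {E : Type*} [AddCommGroup E] [Module ℝ E]
    {B : LinearMap.BilinForm ℝ E} (hB : B.IsSymm) {s η θ : ℝ} (hs : 0 < s) (hη : 0 < η)
    (hθ : θ = η * Real.sqrt s) (w a g : E) :
    η / (2 * Real.sqrt s) *
          (B (w + (1 / θ) • a + (-a - (s / θ) • g)) (w + (1 / θ) • a + (-a - (s / θ) • g))
            - B (w + (1 / θ) • a) (w + (1 / θ) • a))
        + (1 / θ) * B g a
        + η ^ 2 / 2 * B (w + (1 / θ) • a) (w + (1 / θ) • a)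
        - η / (2 * Real.sqrt s) * B (-a - (s / θ) • g) (-a - (s / θ) • g)
        + 1 / (2 * s) * B a a
        - η ^ 2 / 2 * B w w
        + B g w = 0 := by
  have hpol := hB.polarization (w + (1 / θ) • a) (-a - (s / θ) • g)
  obtain ⟨r, hr, rfl⟩ : ∃ r, 0 < r ∧ s = r ^ 2 :=
    ⟨√s, Real.sqrt_pos.2 hs, (Real.sq_sqrt hs.le).symm⟩
  rw [Real.sqrt_sq hr.le] at hθ ⊢
  subst hθ
  simp only [map_add, map_sub, map_neg, map_smul, LinearMap.add_apply, LinearMap.sub_apply,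
    LinearMap.neg_apply, LinearMap.smul_apply, smul_eq_mul, hB.eq a w, hB.eq g w,
    hB.eq g a] at hpol ⊢
  field_simp at hpol ⊢
  linear_combination hpol

end PAGD

theorem PAGD_discrete_energy_identity_general
    {H : Type*} [NormedAddCommGroup H] [InnerProductSpace ℝ H]
    (L : H →ₗ[ℝ] (H →L[ℝ] ℝ))
    (hsymm : ∀ x y : H, L x y = L y x)
    (Linv : (H →L[ℝ] ℝ) → H)
    (hLinv : ∀ f : H →L[ℝ] ℝ, L (Linv f) = f)
    (G' : H → H →L[ℝ] ℝ)
    (xstar : H)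
    -- PAGD parameters and iterates
    (s η θ lam : ℝ) (hs : 0 < s) (hη : 0 < η)
    (hθ : θ = η * Real.sqrt s) (hlam : lam = (1 - θ) / (1 + θ))
    (x y v : ℕ → H)
    (hy : ∀ k : ℕ, y k = x k + lam • (x k - x (k - 1)))
    (hx : ∀ k : ℕ, x (k + 1) = y k - s • Linv (G' (y k)))
    (hv0 : v 0 = x 0)
    (hv : ∀ k : ℕ, v (k + 1) = x k + (1 / θ) • (x (k + 1) - x k)) :
    ∀ k : ℕ,
      η / (2 * Real.sqrt s) *
          (L (v (k + 1) - xstar) (v (k + 1) - xstar)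
            - L (v k - xstar) (v k - xstar))
        + (1 / θ) * (G' (y k)) (y k - x k)
        + η ^ 2 / 2 * L (v k - xstar) (v k - xstar)
        - η / (2 * Real.sqrt s) * L (v (k + 1) - v k) (v (k + 1) - v k)
        + 1 / (2 * s) * L (y k - x k) (y k - x k)
        - η ^ 2 / 2 * L (y k - xstar) (y k - xstar)
        + (G' (y k)) (y k - xstar) = 0 := by
  intro k
  have hθ₀ : θ ≠ 0 := by rw [hθ]; positivity
  have h1θ : 1 + θ ≠ 0 := by rw [hθ]; positivity
  have hvk := PAGD.v_eq_y_add_smul hθ₀ h1θ hlam hy hv0 hv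
  have hstep : v (k + 1) - v k = -(y k - x k) - (s / θ) • Linv (G' (y k)) :=
    PAGD.v_succ_sub_v_eq hθ₀ (hvk k) (hv k) (hx k)
  have hvk_sub : v k - xstar = (y k - xstar) + (1 / θ) • (y k - x k) := by rw [hvk k]; abel
  set g := Linv (G' (y k))
  rw [show v (k + 1) - xstar = (v k - xstar) + (v (k + 1) - v k) by abel, hstep, hvk_sub,
    ← hLinv (G' (y k))]
  exact PAGD.energy_identity_of_decomposition (B := (ContinuousLinearMap.coeLM ℝ).comp L)
    ⟨hsymm⟩ hs hη hθ (y k - xstar) (y k - x k) g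

/-- the discrete analogue of the continuous energy relation.
The PAGD iterates satisfy, for every `k ≥ 0` and a fixed point `x*`:
`(η/(2√s))(‖v_{k+1}−x*‖_𝓛² − ‖v_k−x*‖_𝓛²) + (1/θ)⟨G'(y_k), y_k−x_k⟩
 + (η²/2)‖v_k−x*‖_𝓛² − (η/(2√s))‖v_{k+1}−v_k‖_𝓛² + (1/(2s))‖y_k−x_k‖_𝓛²
 − (η²/2)‖y_k−x*‖_𝓛² + ⟨G'(y_k), y_k−x*⟩ = 0`. -/
theorem PAGD_discrete_energy_identity
    {H : Type*} [NormedAddCommGroup H] [InnerProductSpace ℝ H]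
    [CompleteSpace H] [SeparableSpace H]
    (L : H →ₗ[ℝ] (H →L[ℝ] ℝ))
    (C₁ C₂ : ℝ) (hC₁ : 0 < C₁) (hC₂ : 0 < C₂)
    (hsymm : ∀ x y : H, L x y = L y x)
    (hbdd : ∀ x y : H, L x y ≤ C₂ * ‖x‖ * ‖y‖)
    (hcoer : ∀ x : H, C₁ * ‖x‖ ^ 2 ≤ L x x)
    (Linv : (H →L[ℝ] ℝ) → H)
    (hLinv : ∀ f : H →L[ℝ] ℝ, L (Linv f) = f)
    (hLinv' : ∀ x : H, Linv (L x) = x)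
    (G : H → ℝ) (G' : H → H →L[ℝ] ℝ)
    (hdiff : ∀ x : H, HasFDerivAt G (G' x) x)
    (xstar : H)
    -- PAGD parameters and iterates
    (s η θ lam : ℝ) (hs : 0 < s) (hη : 0 < η)
    (hθ : θ = η * Real.sqrt s) (hlam : lam = (1 - θ) / (1 + θ))
    (x y v : ℕ → H)
    (hy : ∀ k : ℕ, y k = x k + lam • (x k - x (k - 1)))
    (hx : ∀ k : ℕ, x (k + 1) = y k - s • Linv (G' (y k)))
    (hv0 : v 0 = x 0)
    (hv : ∀ k : ℕ, v (k + 1) = x k + (1 / θ) • (x (k + 1) - x k)) :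
    ∀ k : ℕ,
      η / (2 * Real.sqrt s) *
          (L (v (k + 1) - xstar) (v (k + 1) - xstar)
            - L (v k - xstar) (v k - xstar))
        + (1 / θ) * (G' (y k)) (y k - x k)
        + η ^ 2 / 2 * L (v k - xstar) (v k - xstar)
        - η / (2 * Real.sqrt s) * L (v (k + 1) - v k) (v (k + 1) - v k)
        + 1 / (2 * s) * L (y k - x k) (y k - x k)
        - η ^ 2 / 2 * L (y k - xstar) (y k - xstar)
        + (G' (y k)) (y k - xstar) = 0 :=
  PAGD_discrete_energy_identity_general L hsymm Linv hLinv G' xstar s η θ lam hs hη hθ hlam x y v hy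
    hx hv0 hv
end

section
/- The PAGD iterates satisfy, for every k ≥ 0, the identity (η/(2√s)) ‖v_{k+1} − v_k‖_𝓛² = (η/(2√s)) ‖x_k − y_k‖_𝓛² + (√s/(2η)) ‖G'(y_k)‖_{𝓛⁻¹}² + ⟨G'(y_k), y_k − x_k⟩. -/
open TopologicalSpace

/-!
Writing the momentum step through `y k - x k`, the PAGD recurrences give
`v k = x k + ((1 + θ)/θ) (y k - x k)` (this is where `λ (1 + θ) = 1 - θ` enters), hence
`v (k+1) - v k = (x k - y k) - (√s/η) 𝓛⁻¹ G'(y k)`.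
Expanding the `𝓛`-norm of the right-hand side, with `𝓛 𝓛⁻¹ = id` and the symmetry of `𝓛`,
gives the identity.
-/

section Iterates

variable {𝕜 E : Type*} [Field 𝕜] [AddCommGroup E] [Module 𝕜 E]

theorem pagd_v_sub_x {θ lam : 𝕜} (hθ : θ ≠ 0) (h1θ : 1 + θ ≠ 0) (hlam : lam = (1 - θ) / (1 + θ))
    {x y v : ℕ → E}
    (hy : ∀ k, y k = x k + lam • (x k - x (k - 1)))
    (hv0 : v 0 = x 0)
    (hv : ∀ k, v (k + 1) = x k + (1 / θ) • (x (k + 1) - x k)) (k : ℕ) :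
    v k - x k = ((1 + θ) / θ) • (y k - x k) := by
  cases k with
  | zero => simp [hv0, hy 0]
  | succ n =>
    rw [hv n, hy (n + 1), hlam, Nat.add_sub_cancel]
    match_scalars <;> field_simp <;> ring

theorem pagd_v_succ_sub_v {θ lam s : 𝕜} (hθ : θ ≠ 0) (h1θ : 1 + θ ≠ 0)
    (hlam : lam = (1 - θ) / (1 + θ)) {x y v g : ℕ → E}
    (hy : ∀ k, y k = x k + lam • (x k - x (k - 1)))
    (hx : ∀ k, x (k + 1) = y k - s • g k)
    (hv0 : v 0 = x 0)
    (hv : ∀ k, v (k + 1) = x k + (1 / θ) • (x (k + 1) - x k)) (k : ℕ) :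
    v (k + 1) - v k = (x k - y k) - (s / θ) • g k := by
  have hvk : v k = x k + ((1 + θ) / θ) • (y k - x k) :=
    eq_add_of_sub_eq' (pagd_v_sub_x hθ h1θ hlam hy hv0 hv k)
  rw [hv k, hx k, hvk]
  match_scalars <;> field_simp <;> ring

end Iterates

theorem apply_sub_smul_self_of_apply_eq {H : Type*} [NormedAddCommGroup H] [NormedSpace ℝ H]
    (L : H →ₗ[ℝ] (H →L[ℝ] ℝ)) (hsymm : ∀ x y : H, L x y = L y x)
    {u : H} {f : H →L[ℝ] ℝ} (hu : L u = f) (a : H) (c : ℝ) :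
    L (a - c • u) (a - c • u) = L a a - 2 * c * f a + c ^ 2 * f u := by
  have hau : L a u = f a := by rw [hsymm, hu]
  simp only [map_sub, map_smul, hu, sub_apply,
    smul_apply, hau, smul_eq_mul]
  ring

theorem PAGD_vk_increment_identity_general
    {H : Type*} [NormedAddCommGroup H] [InnerProductSpace ℝ H]
    (L : H →ₗ[ℝ] (H →L[ℝ] ℝ))
    (hsymm : ∀ x y : H, L x y = L y x)
    (Linv : (H →L[ℝ] ℝ) → H)
    (hLinv : ∀ f : H →L[ℝ] ℝ, L (Linv f) = f)
    (G' : H → H →L[ℝ] ℝ)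
    -- PAGD parameters and iterates
    (s η θ lam : ℝ) (hs : 0 < s) (hη : 0 < η)
    (hθ : θ = η * Real.sqrt s) (hlam : lam = (1 - θ) / (1 + θ))
    (x y v : ℕ → H)
    (hy : ∀ k : ℕ, y k = x k + lam • (x k - x (k - 1)))
    (hx : ∀ k : ℕ, x (k + 1) = y k - s • Linv (G' (y k)))
    (hv0 : v 0 = x 0)
    (hv : ∀ k : ℕ, v (k + 1) = x k + (1 / θ) • (x (k + 1) - x k)) :
    ∀ k : ℕ,
      η / (2 * Real.sqrt s) * L (v (k + 1) - v k) (v (k + 1) - v k)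
        = η / (2 * Real.sqrt s) * L (x k - y k) (x k - y k)
          + Real.sqrt s / (2 * η) * (G' (y k)) (Linv (G' (y k)))
          + (G' (y k)) (y k - x k) := by
  intro k
  have hr : 0 < Real.sqrt s := Real.sqrt_pos.mpr hs
  have hθ0 : 0 < θ := hθ ▸ mul_pos hη hr
  have hcoef : s / θ = Real.sqrt s / η := by
    rw [hθ, mul_comm, ← div_div, Real.div_sqrt]
  have hfxy : G' (y k) (x k - y k) = -G' (y k) (y k - x k) := by rw [← map_neg, neg_sub]
  rw [pagd_v_succ_sub_v hθ0.ne' (by positivity) hlam hy hx hv0 hv k,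
    apply_sub_smul_self_of_apply_eq L hsymm (hLinv _), hfxy, hcoef]
  field_simp
  ring

/-- relation between successive `v` iterates of PAGD. For every
`k ≥ 0`:
`(η/(2√s))‖v_{k+1} − v_k‖_𝓛² = (η/(2√s))‖x_k − y_k‖_𝓛²
 + (√s/(2η))‖G'(y_k)‖_{𝓛⁻¹}² + ⟨G'(y_k), y_k − x_k⟩`
(where `‖f‖_{𝓛⁻¹}² = ⟨f, 𝓛⁻¹f⟩`). -/
theorem PAGD_vk_increment_identity
    {H : Type*} [NormedAddCommGroup H] [InnerProductSpace ℝ H]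
    [CompleteSpace H] [SeparableSpace H]
    (L : H →ₗ[ℝ] (H →L[ℝ] ℝ))
    (C₁ C₂ : ℝ) (hC₁ : 0 < C₁) (hC₂ : 0 < C₂)
    (hsymm : ∀ x y : H, L x y = L y x)
    (hbdd : ∀ x y : H, L x y ≤ C₂ * ‖x‖ * ‖y‖)
    (hcoer : ∀ x : H, C₁ * ‖x‖ ^ 2 ≤ L x x)
    (Linv : (H →L[ℝ] ℝ) → H)
    (hLinv : ∀ f : H →L[ℝ] ℝ, L (Linv f) = f)
    (hLinv' : ∀ x : H, Linv (L x) = x)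
    (G : H → ℝ) (G' : H → H →L[ℝ] ℝ)
    (hdiff : ∀ x : H, HasFDerivAt G (G' x) x)
    -- PAGD parameters and iterates
    (s η θ lam : ℝ) (hs : 0 < s) (hη : 0 < η)
    (hθ : θ = η * Real.sqrt s) (hlam : lam = (1 - θ) / (1 + θ))
    (x y v : ℕ → H)
    (hy : ∀ k : ℕ, y k = x k + lam • (x k - x (k - 1)))
    (hx : ∀ k : ℕ, x (k + 1) = y k - s • Linv (G' (y k)))
    (hv0 : v 0 = x 0)
    (hv : ∀ k : ℕ, v (k + 1) = x k + (1 / θ) • (x (k + 1) - x k)) :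
    ∀ k : ℕ,
      η / (2 * Real.sqrt s) * L (v (k + 1) - v k) (v (k + 1) - v k)
        = η / (2 * Real.sqrt s) * L (x k - y k) (x k - y k)
          + Real.sqrt s / (2 * η) * (G' (y k)) (Linv (G' (y k)))
          + (G' (y k)) (y k - x k) :=
  PAGD_vk_increment_identity_general L hsymm Linv hLinv G' s η θ lam hs hη hθ hlam x y v hy hx hv0
    hv
end
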